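/- arXiv:1302.2512 — 6 statements merged into one kernel-verified Lean document; each statement's English description precedes it below -/
import Mathlib

section
/- For any Boolean function b: \{0,1\}^n \to \{0,1\} and any single coordinate Y_i of the noisy output, I(b(X^n); Y_i) \le 1 - H(\alpha) holds; more generally the sum \sum_{i=1}^n I(b(X^n); Y_i) \le 1 - H(\alpha). -/
/-!
Write `ρ = 1 - 2α`, `p_u = Pr{b(Xⁿ) = u}` and `c_{u,i} = E[1{b(Xⁿ) = u} (-1)^{X_i}]`. Given
`b(Xⁿ) = u`, the coordinate `Y_i` is a bit with bias `ρ c_{u,i} / p_u`, so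
`I(b; Y_i) = ∑_u p_u C(ρ c_{u,i} / p_u)` with `C(x) = 1 - H((1 + x) / 2)`. Since `C'` is a multiple
of `artanh`, whose odd power series has nonnegative coefficients, `C(μρ) ≤ μ² C(ρ)` for `|μ| ≤ 1`;
hence `I(b; Y_i) ≤ C(ρ) ∑_u c_{u,i}² / p_u`. The `c_{u,i}` are the coefficients of `1{b = u}` on
the orthonormal characters `(-1)^{X_i}`, which are also orthogonal to the constants, so Bessel's
inequality gives `∑_i c_{u,i}² ≤ p_u (1 - p_u)`. Summing over `i` and `u` bounds
`∑_i I(b; Y_i)` by `C(ρ) = 1 - H(α)`.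
-/

open Finset

/-- `f2 x = -x log₂ x`, the summand of base-2 Shannon entropy. -/
noncomputable def f2 (x : ℝ) : ℝ := -x * Real.logb 2 x

/-- Binary entropy function `H(α)` (base 2). -/
noncomputable def binEnt (α : ℝ) : ℝ := f2 α + f2 (1 - α)

/-- Joint pmf of `(Xⁿ, Yⁿ)` where `Xⁿ` is i.i.d. Bernoulli(1/2) and
`Yⁿ = Xⁿ ⊕ Zⁿ` with `Zⁿ` i.i.d. Bernoulli(α) (a memoryless BSC(α)). -/
noncomputable def jointP (n : ℕ) (α : ℝ) (x y : Fin n → Bool) : ℝ :=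
  (1/2)^n * ∏ i, (if x i = y i then 1 - α else α)

/-- `Pr{b(Xⁿ) = u, Yⁿ = y}`. -/
noncomputable def pBY (n : ℕ) (α : ℝ) (b : (Fin n → Bool) → Bool) (u : Bool)
    (y : Fin n → Bool) : ℝ :=
  ∑ x : Fin n → Bool, if b x = u then jointP n α x y else 0

/-- `Pr{b(Xⁿ) = u}` for `Xⁿ` uniform on `{0,1}ⁿ`. -/
noncomputable def pB (n : ℕ) (b : (Fin n → Bool) → Bool) (u : Bool) : ℝ :=
  ∑ x : Fin n → Bool, if b x = u then (1/2)^n else 0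

/-- `H(b(Xⁿ))`, the entropy of the Boolean function's output. -/
noncomputable def HB (n : ℕ) (b : (Fin n → Bool) → Bool) : ℝ :=
  ∑ u : Bool, f2 (pB n b u)

/-- `Pr{b(Xⁿ) = 0 ∣ Yⁿ = y}` (note `Pr{Yⁿ = y} = 2⁻ⁿ` since `Yⁿ` is uniform;
`0` is encoded as `false`). -/
noncomputable def condP (n : ℕ) (α : ℝ) (b : (Fin n → Bool) → Bool)
    (y : Fin n → Bool) : ℝ :=
  (2:ℝ)^n * pBY n α b false y

/-- The conditional entropy `H(b(Xⁿ) ∣ Yⁿ)`. -/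
noncomputable def condHB (n : ℕ) (α : ℝ) (b : (Fin n → Bool) → Bool) : ℝ :=
  ∑ y : Fin n → Bool, (1/2)^n * ∑ u : Bool, f2 ((2:ℝ)^n * pBY n α b u y)

/-- The mutual information `I(b(Xⁿ); Yⁿ) = H(b(Xⁿ)) - H(b(Xⁿ) ∣ Yⁿ)`. -/
noncomputable def MI (n : ℕ) (α : ℝ) (b : (Fin n → Bool) → Bool) : ℝ :=
  HB n b - condHB n α b

/-- `Pr{b(Xⁿ) = u, Y_i = v}`. -/
noncomputable def pBYi (n : ℕ) (α : ℝ) (b : (Fin n → Bool) → Bool) (i : Fin n)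
    (u v : Bool) : ℝ :=
  ∑ x : Fin n → Bool,
    if b x = u then (1/2)^n * (if x i = v then 1 - α else α) else 0

/-- The single-coordinate mutual information
`I(b(Xⁿ); Y_i) = H(b(Xⁿ)) - H(b(Xⁿ) ∣ Y_i)` (note `Pr{Y_i = v} = 1/2`). -/
noncomputable def MIi (n : ℕ) (α : ℝ) (b : (Fin n → Bool) → Bool) (i : Fin n) : ℝ :=
  HB n b - ∑ v : Bool, (1/2) * ∑ u : Bool, f2 (2 * pBYi n α b i u v)

open Real

lemma f2_eq_negMulLog (x : ℝ) : f2 x = negMulLog x / log 2 := by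
  simp only [f2, negMulLog, logb]; ring

lemma binEnt_eq_binEntropy (x : ℝ) : binEnt x = binEntropy x / log 2 := by
  rw [binEnt, f2_eq_negMulLog, f2_eq_negMulLog, binEntropy_eq_negMulLog_add_negMulLog_one_sub]
  ring

lemma binEnt_one_sub (x : ℝ) : binEnt (1 - x) = binEnt x := by
  simp only [binEnt_eq_binEntropy, binEntropy_one_sub]

/-- The capacity of the binary symmetric channel with crossover probability `(1 - ρ) / 2`. -/
noncomputable def bscCapacity (ρ : ℝ) : ℝ := 1 - binEnt ((1 + ρ) / 2)

lemma bscCapacity_one_sub_two_mul (α : ℝ) : bscCapacity (1 - 2 * α) = 1 - binEnt α := by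
  rw [bscCapacity, show (1 + (1 - 2 * α)) / 2 = 1 - α by ring, binEnt_one_sub]

lemma bscCapacity_neg (ρ : ℝ) : bscCapacity (-ρ) = bscCapacity ρ := by
  rw [bscCapacity, bscCapacity, show (1 + -ρ) / 2 = 1 - (1 + ρ) / 2 by ring, binEnt_one_sub]

lemma bscCapacity_abs (ρ : ℝ) : bscCapacity |ρ| = bscCapacity ρ := by
  rcases abs_choice ρ with h | h <;> rw [h]
  exact bscCapacity_neg ρ

lemma bscCapacity_nonneg (ρ : ℝ) : 0 ≤ bscCapacity ρ := by
  rw [bscCapacity, binEnt_eq_binEntropy, sub_nonneg, div_le_one (log_pos one_lt_two)]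
  exact binEntropy_le_log_two

lemma bscCapacity_zero : bscCapacity 0 = 0 := by
  rw [bscCapacity, binEnt_eq_binEntropy, show (1 + 0 : ℝ) / 2 = 2⁻¹ by norm_num,
    binEntropy_two_inv, div_self (log_pos one_lt_two).ne', sub_self]

@[fun_prop]
lemma continuous_bscCapacity : Continuous bscCapacity := by
  unfold bscCapacity
  simp_rw [binEnt_eq_binEntropy]
  fun_prop

lemma hasDerivAt_bscCapacity {ρ : ℝ} (hρ : |ρ| < 1) :
    HasDerivAt bscCapacity ((log (1 + ρ) - log (1 - ρ)) / (2 * log 2)) ρ := by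
  obtain ⟨h₁, h₂⟩ := abs_lt.1 hρ
  have hs : HasDerivAt (fun x : ℝ => (1 + x) / 2) (1 / 2) ρ := by
    simpa using ((hasDerivAt_id ρ).const_add 1).div_const 2
  have hH := (hasDerivAt_binEntropy (p := (1 + ρ) / 2) (by linarith) (by linarith)).comp ρ hs
  have hG := (hH.div_const (log 2)).const_sub 1
  have hfun : bscCapacity = fun x => 1 - (binEntropy ∘ fun x => (1 + x) / 2) x / log 2 := by
    funext x
    simp [bscCapacity, binEnt_eq_binEntropy]
  rw [hfun]
  refine hG.congr_deriv ?_
  rw [show 1 - (1 + ρ) / 2 = (1 - ρ) / 2 by ring, log_div (by linarith) two_ne_zero,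
    log_div (by linarith) two_ne_zero]
  ring

lemma log_one_add_sub_log_one_sub_mul_le {μ x : ℝ} (hμ₀ : 0 ≤ μ) (hμ₁ : μ ≤ 1) (hx₀ : 0 ≤ x)
    (hx₁ : x < 1) :
    log (1 + μ * x) - log (1 - μ * x) ≤ μ * (log (1 + x) - log (1 - x)) := by
  have hμx : |μ * x| < 1 := by
    rw [abs_of_nonneg (by positivity)]; nlinarith
  refine hasSum_le (fun k => ?_) (hasSum_log_sub_log_of_abs_lt_one hμx)
    ((hasSum_log_sub_log_of_abs_lt_one (by rwa [abs_of_nonneg hx₀])).mul_left μ)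
  have hpow := pow_le_of_le_one hμ₀ hμ₁ (show 2 * k + 1 ≠ 0 by omega)
  have hterm : 0 ≤ 2 * (1 / (2 * (k : ℝ) + 1)) * x ^ (2 * k + 1) := by positivity
  rw [mul_pow]
  nlinarith

lemma bscCapacity_mul_le_of_nonneg {μ ρ : ℝ} (hμ₀ : 0 ≤ μ) (hμ₁ : μ ≤ 1) (hρ₀ : 0 ≤ ρ)
    (hρ₁ : ρ ≤ 1) : bscCapacity (μ * ρ) ≤ μ ^ 2 * bscCapacity ρ := by
  let D x := μ ^ 2 * bscCapacity x - bscCapacity (μ * x)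
  have hD : MonotoneOn D (Set.Icc 0 1) := by
    refine monotoneOn_of_hasDerivWithinAt_nonneg (convex_Icc 0 1) (by fun_prop)
      (f' := fun x => μ ^ 2 * ((log (1 + x) - log (1 - x)) / (2 * log 2))
        - (log (1 + μ * x) - log (1 - μ * x)) / (2 * log 2) * μ) ?_ ?_ <;>
    rw [interior_Icc] <;> rintro x ⟨hx₀, hx₁⟩
    · have hx : |x| < 1 := abs_lt.2 ⟨by linarith, hx₁⟩
      have hμx : |μ * x| < 1 := abs_lt.2 ⟨by nlinarith, by nlinarith⟩
      have h₁ := (hasDerivAt_bscCapacity hx).const_mul (μ ^ 2)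
      have h₂ := (hasDerivAt_bscCapacity hμx).comp x ((hasDerivAt_id x).const_mul μ)
      exact ((h₁.sub h₂).congr_deriv (by ring)).hasDerivWithinAt
    · have := log_one_add_sub_log_one_sub_mul_le hμ₀ hμ₁ hx₀.le hx₁
      have hlog := log_pos one_lt_two
      rw [show ∀ a b : ℝ, μ ^ 2 * (a / (2 * log 2)) - b / (2 * log 2) * μ
          = μ * (μ * a - b) / (2 * log 2) by intros; ring]
      exact div_nonneg (mul_nonneg hμ₀ (by linarith)) (by positivity)
  have := hD ⟨le_rfl, zero_le_one⟩ ⟨hρ₀, hρ₁⟩ hρ₀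
  simp only [D, mul_zero, bscCapacity_zero] at this
  linarith

lemma bscCapacity_mul_le {μ ρ : ℝ} (hμ : |μ| ≤ 1) (hρ : |ρ| ≤ 1) :
    bscCapacity (μ * ρ) ≤ μ ^ 2 * bscCapacity ρ := by
  have := bscCapacity_mul_le_of_nonneg (abs_nonneg μ) hμ (abs_nonneg ρ) hρ
  rwa [← abs_mul, bscCapacity_abs, sq_abs, bscCapacity_abs] at this

lemma f2_sub_avg_eq_mul_bscCapacity (p c : ℝ) :
    f2 p - (f2 (p + c) + f2 (p - c)) / 2 = p * bscCapacity (c / p) := by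
  simp only [bscCapacity, binEnt_eq_binEntropy, binEntropy_eq_negMulLog_add_negMulLog_one_sub,
    f2_eq_negMulLog]
  rcases eq_or_ne p 0 with rfl | hp
  · simp [negMulLog, log_neg_eq_log]
    ring
  · obtain ⟨μ, rfl⟩ : ∃ μ, c = p * μ := ⟨c / p, by field_simp⟩
    have hhalf : negMulLog 2⁻¹ = 2⁻¹ * log 2 := by simp [negMulLog]
    rw [mul_div_cancel_left₀ μ hp, show p + p * μ = p * (1 + μ) by ring,
      show p - p * μ = p * (1 - μ) by ring, show (1 + μ) / 2 = (1 + μ) * 2⁻¹ by ring,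
      show 1 - (1 + μ) * 2⁻¹ = (1 - μ) * 2⁻¹ by ring]
    simp only [negMulLog_mul, hhalf]
    field_simp
    ring

lemma mul_bscCapacity_div_le {p c ρ : ℝ} (hc : |c| ≤ p) (hρ : |ρ| ≤ 1) :
    p * bscCapacity (ρ * c / p) ≤ bscCapacity ρ * (c ^ 2 / p) := by
  rcases ((abs_nonneg c).trans hc).eq_or_lt with rfl | hp
  · simp
  have hμ : |c / p| ≤ 1 := by
    rw [abs_div, abs_of_pos hp]
    exact div_le_one_of_le₀ hc hp.le
  calc p * bscCapacity (ρ * c / p) = p * bscCapacity (c / p * ρ) := by ring_nf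
    _ ≤ p * ((c / p) ^ 2 * bscCapacity ρ) := by gcongr; exact bscCapacity_mul_le hμ hρ
    _ = bscCapacity ρ * (c ^ 2 / p) := by field_simp

theorem sum_sq_weighted_inner_le {α κ : Type*} [Fintype α] [Fintype κ] [DecidableEq κ] {w : ℝ}
    (hw : 0 ≤ w) (φ : κ → α → ℝ)
    (hφ : ∀ k l, w * ∑ x, φ k x * φ l x = if k = l then 1 else 0) (g : α → ℝ) :
    ∑ k, (w * ∑ x, φ k x * g x) ^ 2 ≤ w * ∑ x, g x ^ 2 := by
  have hsqrt : ∀ a b : ℝ, √w * a * (√w * b) = w * (b * a) := fun a b => by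
    linear_combination a * b * mul_self_sqrt hw
  let e k : EuclideanSpace ℝ α := WithLp.toLp 2 (√w • φ k)
  have he : Orthonormal ℝ e := by
    refine orthonormal_iff_ite.2 fun k l => ?_
    simp only [e, PiLp.inner_apply, Pi.smul_apply, smul_eq_mul, RCLike.inner_apply, conj_trivial,
      hsqrt, ← Finset.mul_sum, hφ]
  simpa only [e, PiLp.inner_apply, Pi.smul_apply, smul_eq_mul, RCLike.inner_apply, conj_trivial,
    EuclideanSpace.norm_sq_eq, norm_eq_abs, sq_abs, hsqrt, ← Finset.mul_sum, mul_pow,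
    sq_sqrt hw] using he.sum_inner_products_le (x := WithLp.toLp 2 (√w • g)) (s := .univ)

section BooleanCube

variable {ι : Type*} [DecidableEq ι]

def boolSign (v : Bool) : ℝ := if v then -1 else 1

@[simp] lemma boolSign_true : boolSign true = -1 := rfl

@[simp] lemma boolSign_false : boolSign false = 1 := rfl

lemma boolSign_not (v : Bool) : boolSign (!v) = -boolSign v := by
  cases v <;> simp [boolSign]

lemma boolSign_mul_self (v : Bool) : boolSign v * boolSign v = 1 := by
  cases v <;> simp [boolSign]

def flipAt (i : ι) : Equiv.Perm (ι → Bool) :=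
  Function.Involutive.toPerm (fun x => Function.update x i (!x i)) fun x => by
    ext j
    rcases eq_or_ne j i with rfl | h <;> simp [*]

lemma flipAt_apply (i : ι) (x : ι → Bool) : flipAt i x = Function.update x i (!x i) := rfl

lemma sum_eq_zero_of_apply_perm_eq_neg {α : Type*} [Fintype α] (σ : Equiv.Perm α) {f : α → ℝ}
    (h : ∀ x, f (σ x) = -f x) : ∑ x, f x = 0 := by
  have := Equiv.sum_comp σ f
  simp only [h, Finset.sum_neg_distrib] at this
  linarith

lemma sum_boolSign_apply [Fintype ι] (i : ι) : ∑ x : ι → Bool, boolSign (x i) = 0 :=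
  sum_eq_zero_of_apply_perm_eq_neg (flipAt i) fun x => by simp [flipAt_apply, boolSign_not]

lemma sum_boolSign_mul_boolSign [Fintype ι] {i j : ι} (hij : i ≠ j) :
    ∑ x : ι → Bool, boolSign (x i) * boolSign (x j) = 0 :=
  sum_eq_zero_of_apply_perm_eq_neg (flipAt j) fun x => by
    simp [flipAt_apply, boolSign_not, Function.update_of_ne hij]

def walshLinear : Option ι → (ι → Bool) → ℝ
  | none, _ => 1
  | some i, x => boolSign (x i)

lemma walshLinear_orthonormal [Fintype ι] (k l : Option ι) :
    (1 / 2) ^ Fintype.card ι * ∑ x, walshLinear k x * walshLinear l x =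
      if k = l then 1 else 0 := by
  have hcard : (1 / 2 : ℝ) ^ Fintype.card ι * ∑ _x : ι → Bool, (1 : ℝ) = 1 := by
    simp
  rcases k with _ | i <;> rcases l with _ | j <;>
    simp only [walshLinear, one_mul, mul_one, sum_boolSign_apply, mul_zero, hcard] <;> simp
  split_ifs with h
  · simp [h, boolSign_mul_self]
  · simp [sum_boolSign_mul_boolSign h]

end BooleanCube

noncomputable def walshCoeff (n : ℕ) (b : (Fin n → Bool) → Bool) (u : Bool) (i : Fin n) : ℝ :=
  ∑ x : Fin n → Bool, if b x = u then (1/2)^n * boolSign (x i) else 0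

section BooleanFunction

variable {n : ℕ} (b : (Fin n → Bool) → Bool)

lemma pB_nonneg (u : Bool) : 0 ≤ pB n b u :=
  Finset.sum_nonneg fun x _ => by split_ifs <;> positivity

lemma sum_pB : ∑ u, pB n b u = 1 := by
  simp only [pB]
  rw [Finset.sum_comm]
  simp

lemma abs_walshCoeff_le (u : Bool) (i : Fin n) : |walshCoeff n b u i| ≤ pB n b u := by
  refine (Finset.abs_sum_le_sum_abs _ _).trans (Finset.sum_le_sum fun x _ => ?_)
  split_ifs <;> cases x i <;> simp [boolSign]

lemma two_mul_pBYi (α : ℝ) (i : Fin n) (u v : Bool) :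
    2 * pBYi n α b i u v = pB n b u + (1 - 2 * α) * boolSign v * walshCoeff n b u i := by
  simp only [pBYi, pB, walshCoeff, Finset.mul_sum, ← Finset.sum_add_distrib]
  refine Finset.sum_congr rfl fun x _ => ?_
  cases x i <;> cases v <;> by_cases hb : b x = u <;> simp [hb, boolSign] <;> ring

lemma sq_pB_add_sum_sq_walshCoeff_le (u : Bool) :
    pB n b u ^ 2 + ∑ i, walshCoeff n b u i ^ 2 ≤ pB n b u := by
  have := sum_sq_weighted_inner_le (by positivity) walshLinear walshLinear_orthonormal
    (fun x => if b x = u then (1 : ℝ) else 0)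
  simpa [Fintype.sum_option, walshLinear, pB, walshCoeff, Finset.mul_sum, -Finset.sum_boole]
    using this

lemma sum_sq_walshCoeff_div_le (u : Bool) :
    (∑ i, walshCoeff n b u i ^ 2) / pB n b u ≤ 1 - pB n b u := by
  rcases (pB_nonneg b u).eq_or_lt with hp | hp
  · simp [← hp]
  rw [div_le_iff₀ hp]
  linarith [sq_pB_add_sum_sq_walshCoeff_le b u]

lemma MIi_eq (α : ℝ) (i : Fin n) :
    MIi n α b i =
      ∑ u, pB n b u * bscCapacity ((1 - 2 * α) * walshCoeff n b u i / pB n b u) := by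
  simp only [← f2_sub_avg_eq_mul_bscCapacity, MIi, HB, two_mul_pBYi, Fintype.sum_bool,
    boolSign_true, boolSign_false]
  ring_nf

lemma MIi_nonneg (α : ℝ) (i : Fin n) : 0 ≤ MIi n α b i := by
  rw [MIi_eq]
  exact Finset.sum_nonneg fun u _ => mul_nonneg (pB_nonneg b u) (bscCapacity_nonneg _)

lemma sum_MIi_le {α : ℝ} (hρ : |1 - 2 * α| ≤ 1) :
    ∑ i, MIi n α b i ≤ bscCapacity (1 - 2 * α) := by
  calc ∑ i, MIi n α b i
      ≤ ∑ i, ∑ u, bscCapacity (1 - 2 * α) * (walshCoeff n b u i ^ 2 / pB n b u) := by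
        simp only [MIi_eq]
        refine Finset.sum_le_sum fun i _ => Finset.sum_le_sum fun u _ => ?_
        exact mul_bscCapacity_div_le (abs_walshCoeff_le b u i) hρ
    _ = bscCapacity (1 - 2 * α) * ∑ u, (∑ i, walshCoeff n b u i ^ 2) / pB n b u := by
        simp only [Finset.mul_sum, Finset.sum_div]
        exact Finset.sum_comm
    _ ≤ bscCapacity (1 - 2 * α) * ∑ u, (1 - pB n b u) := by
        gcongr with u
        · exact bscCapacity_nonneg _
        · exact sum_sq_walshCoeff_div_le b u
    _ = bscCapacity (1 - 2 * α) := by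
        rw [Finset.sum_sub_distrib, sum_pB]
        norm_num

end BooleanFunction

/-- For any Boolean function `b` and any single coordinate `Y_i`,
`I(b(Xⁿ); Y_i) ≤ 1 - H(α)`; more generally `∑ i, I(b(Xⁿ); Y_i) ≤ 1 - H(α)`. -/
theorem single_coordinate_bound (n : ℕ) (α : ℝ) (hα : α ∈ Set.Icc (0:ℝ) (1/2))
    (b : (Fin n → Bool) → Bool) :
    (∀ i : Fin n, MIi n α b i ≤ 1 - binEnt α) ∧
      (∑ i : Fin n, MIi n α b i ≤ 1 - binEnt α) := by
  have hρ : |1 - 2 * α| ≤ 1 := abs_le.2 ⟨by linarith [hα.2], by linarith [hα.1]⟩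
  have hsum := bscCapacity_one_sub_two_mul α ▸ sum_MIi_le b hρ
  refine ⟨fun i => le_trans ?_ hsum, hsum⟩
  exact Finset.single_le_sum (fun j _ => MIi_nonneg b α j) (Finset.mem_univ i)
end

section
/- If b, b': \{0,1\}^n \to \{0,1\} are Boolean functions such that both b(X^n) and b'(Y^n) are Bernoulli(1/2), then I(b(X^n); b'(Y^n)) \le 1 - H(\alpha). -/
open Finset

/-- Joint pmf `Pr{b(Xⁿ) = u, b'(Yⁿ) = v}`. -/
noncomputable def pJoint2 (n : ℕ) (α : ℝ) (b b' : (Fin n → Bool) → Bool)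
    (u v : Bool) : ℝ :=
  ∑ x : Fin n → Bool, ∑ y : Fin n → Bool,
    if b x = u ∧ b' y = v then jointP n α x y else 0

/-- `I(b(Xⁿ); b'(Yⁿ)) = H(b(Xⁿ)) + H(b'(Yⁿ)) - H(b(Xⁿ), b'(Yⁿ))`; note that `Yⁿ`
is uniform, so `H(b'(Yⁿ)) = HB n b'`. -/
noncomputable def MI2 (n : ℕ) (α : ℝ) (b b' : (Fin n → Bool) → Bool) : ℝ :=
  HB n b + HB n b' - ∑ u : Bool, ∑ v : Bool, f2 (pJoint2 n α b b' u v)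

lemma sum_pi_bool {n : ℕ} (h : Fin n → Bool → ℝ) :
    ∑ x : Fin n → Bool, ∏ i, h i (x i) = ∏ i, (h i false + h i true) := by
  have := Finset.prod_univ_sum (fun _ : Fin n => (univ : Finset Bool)) h
  rw [Fintype.piFinset_univ] at this
  rw [← this]
  congr 1; ext i
  rw [Fintype.sum_bool]; ring

/-- sign of a Bool -/
def sgn (b : Bool) : ℝ := if b then -1 else 1

lemma sgn_sq (b : Bool) : sgn b * sgn b = 1 := by cases b <;> simp [sgn]

/-- character -/
def chi {n : ℕ} (S : Finset (Fin n)) (x : Fin n → Bool) : ℝ := ∏ i ∈ S, sgn (x i)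

lemma chi_eq_prod_univ {n : ℕ} (S : Finset (Fin n)) (x : Fin n → Bool) :
    chi S x = ∏ i, (if i ∈ S then sgn (x i) else 1) := by
  rw [chi, Finset.prod_ite_mem, univ_inter]

lemma kernel_expand {n : ℕ} (α : ℝ) (x y : Fin n → Bool) :
    ∑ S : Finset (Fin n), (1 - 2*α)^S.card * chi S x * chi S y
      = (2:ℝ)^n * ∏ i, (if x i = y i then 1 - α else α) := by
  have h1 : ∀ S : Finset (Fin n), (1 - 2*α)^S.card * chi S x * chi S y
      = ∏ i ∈ S, ((1 - 2*α) * (sgn (x i) * sgn (y i))) := by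
    intro S
    rw [chi, chi, Finset.prod_mul_distrib, Finset.prod_mul_distrib, Finset.prod_const]
    ring
  simp only [h1]
  have h2 := Finset.prod_add (fun i : Fin n => (1 - 2*α) * (sgn (x i) * sgn (y i)))
    (fun _ : Fin n => (1:ℝ)) univ
  simp only [Finset.prod_const_one, mul_one, Finset.powerset_univ] at h2
  have h3 : ∀ i : Fin n, (1 - 2*α) * (sgn (x i) * sgn (y i)) + 1
      = 2 * (if x i = y i then 1 - α else α) := by
    intro i
    cases hx : x i <;> cases hy : y i <;> simp [sgn] <;> ring
  calc ∑ S : Finset (Fin n), ∏ i ∈ S, ((1 - 2*α) * (sgn (x i) * sgn (y i)))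
      = ∏ i, ((1 - 2*α) * (sgn (x i) * sgn (y i)) + 1) := h2.symm
    _ = ∏ i, (2 * (if x i = y i then 1 - α else α)) := by
        exact Finset.prod_congr rfl (fun i _ => h3 i)
    _ = (2:ℝ)^n * ∏ i, (if x i = y i then 1 - α else α) := by
        rw [Finset.prod_mul_distrib, Finset.prod_const, Finset.card_univ, Fintype.card_fin]

noncomputable def fhat (n : ℕ) (b : (Fin n → Bool) → Bool) (S : Finset (Fin n)) : ℝ :=
  (1/2)^n * ∑ x : Fin n → Bool, (if b x then (-1:ℝ) else 1) * chi S x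

lemma corr_formula (n : ℕ) (α : ℝ) (b b' : (Fin n → Bool) → Bool) :
    ∑ x : Fin n → Bool, ∑ y : Fin n → Bool,
      jointP n α x y * ((if b x then (-1:ℝ) else 1) * (if b' y then (-1:ℝ) else 1))
    = ∑ S : Finset (Fin n), (1 - 2*α)^S.card * (fhat n b S * fhat n b' S) := by
  have step1 : ∀ S : Finset (Fin n), (1 - 2*α)^S.card * (fhat n b S * fhat n b' S)
      = ∑ x : Fin n → Bool, ∑ y : Fin n → Bool,
          (1/2:ℝ)^n * (1/2:ℝ)^n * ((if b x then (-1:ℝ) else 1) * (if b' y then (-1:ℝ) else 1))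
            * ((1 - 2*α)^S.card * chi S x * chi S y) := by
    intro S
    unfold fhat
    simp only [Finset.mul_sum, Finset.sum_mul]
    rw [Finset.sum_comm]
    refine Finset.sum_congr rfl (fun x _ => Finset.sum_congr rfl (fun y _ => by ring))
  symm
  rw [Finset.sum_congr rfl (fun S _ => step1 S)]
  rw [Finset.sum_comm]
  refine Finset.sum_congr rfl (fun x _ => ?_)
  rw [Finset.sum_comm]
  refine Finset.sum_congr rfl (fun y _ => ?_)
  rw [← Finset.mul_sum, kernel_expand, jointP]
  have h : ((1:ℝ)/2)^n * (1/2:ℝ)^n * (2:ℝ)^n = (1/2:ℝ)^n := by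
    rw [← mul_pow, ← mul_pow]; norm_num
  linear_combination ((if b x = true then (-1:ℝ) else 1) * (if b' y = true then (-1:ℝ) else 1)
    * (∏ i, (if x i = y i then 1-α else α))) * h

lemma sum_half_pow (n : ℕ) : ∑ _x : Fin n → Bool, ((1:ℝ)/2)^n = 1 := by
  rw [Finset.sum_const, Finset.card_univ]
  have : Fintype.card (Fin n → Bool) = 2^n := by
    rw [Fintype.card_fun, Fintype.card_bool, Fintype.card_fin]
  rw [this, nsmul_eq_mul]
  push_cast
  rw [← mul_pow]
  norm_num

lemma pB_add (n : ℕ) (b : (Fin n → Bool) → Bool) : pB n b false + pB n b true = 1 := by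
  unfold pB
  rw [← Finset.sum_add_distrib]
  have h1 : ∀ x, ((if b x = false then ((1:ℝ)/2)^n else 0) + (if b x = true then ((1:ℝ)/2)^n else 0)) = ((1:ℝ)/2)^n := fun x => by cases hx : b x <;> simp [hx]
  rw [Finset.sum_congr rfl (fun x _ => h1 x)]
  exact sum_half_pow n

lemma jointP_zero (n : ℕ) (x y : Fin n → Bool) :
    jointP n 0 x y = if x = y then ((1:ℝ)/2)^n else 0 := by
  unfold jointP
  have : ∀ i : Fin n, (if x i = y i then 1 - (0:ℝ) else 0) = if x i = y i then 1 else 0 := by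
    intro i; norm_num
  rw [Finset.prod_congr rfl (fun i _ => this i), Fintype.prod_boole]
  have hiff : (∀ i, x i = y i) ↔ x = y := funext_iff.symm
  by_cases hxy : x = y <;> simp [hxy, hiff]

lemma parseval (n : ℕ) (b : (Fin n → Bool) → Bool) :
    ∑ S : Finset (Fin n), fhat n b S * fhat n b S = 1 := by
  have h := corr_formula n 0 b b
  simp only [mul_zero, sub_zero, one_pow, one_mul] at h
  rw [← h]
  have hy : ∀ x : Fin n → Bool,
      (∑ y : Fin n → Bool, jointP n 0 x y *
        ((if b x then (-1:ℝ) else 1) * (if b y then (-1:ℝ) else 1))) = (1/2:ℝ)^n := by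
    intro x
    have : ∀ y : Fin n → Bool, jointP n 0 x y *
        ((if b x then (-1:ℝ) else 1) * (if b y then (-1:ℝ) else 1))
        = if y = x then ((1/2:ℝ)^n * ((if b x then (-1:ℝ) else 1) * (if b y then (-1:ℝ) else 1))) else 0 := by
      intro y
      rw [jointP_zero]
      by_cases hxy : y = x
      · subst hxy; simp
      · rw [if_neg (fun h : x = y => hxy h.symm), if_neg hxy, zero_mul]
    rw [Finset.sum_congr rfl (fun y _ => this y), Finset.sum_ite_eq' univ x]
    rw [if_pos (Finset.mem_univ x)]
    cases hx : b x <;> norm_num [hx]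
  rw [Finset.sum_congr rfl (fun x _ => hy x)]
  exact sum_half_pow n

lemma fhat_empty (n : ℕ) (b : (Fin n → Bool) → Bool) (hb : pB n b false = 1/2) :
    fhat n b ∅ = 0 := by
  unfold fhat
  have hc : ∀ x : Fin n → Bool, chi (∅ : Finset (Fin n)) x = 1 := fun x => by
    simp [chi]
  have h1 : ∀ x : Fin n → Bool, (if b x then (-1:ℝ) else 1) * chi (∅ : Finset (Fin n)) x
      = (if b x = false then (1:ℝ) else 0) - (if b x = true then (1:ℝ) else 0) := fun x => by
    rw [hc]; cases hx : b x <;> simp [hx]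
  rw [Finset.sum_congr rfl (fun x _ => h1 x), Finset.sum_sub_distrib]
  have hbt : pB n b true = 1/2 := by have := pB_add n b; linarith
  have e1 : ∑ x : Fin n → Bool, (if b x = false then (1:ℝ) else 0)
      = (2:ℝ)^n * pB n b false := by
    unfold pB
    rw [Finset.mul_sum]
    refine Finset.sum_congr rfl (fun x _ => ?_)
    by_cases hx : b x = false <;> simp [hx] <;> rw [← mul_pow] <;> norm_num
  have e2 : ∑ x : Fin n → Bool, (if b x = true then (1:ℝ) else 0)
      = (2:ℝ)^n * pB n b true := by
    unfold pB
    rw [Finset.mul_sum]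
    refine Finset.sum_congr rfl (fun x _ => ?_)
    by_cases hx : b x = true <;> simp [hx] <;> rw [← mul_pow] <;> norm_num
  rw [e1, e2, hb, hbt]
  ring

/-- The key correlation bound. -/
lemma corr_bound (n : ℕ) (α : ℝ) (hα : α ∈ Set.Icc (0:ℝ) (1/2))
    (b b' : (Fin n → Bool) → Bool)
    (hb : pB n b false = 1/2) (hb' : pB n b' false = 1/2) :
    |∑ x : Fin n → Bool, ∑ y : Fin n → Bool,
      jointP n α x y * ((if b x then (-1:ℝ) else 1) * (if b' y then (-1:ℝ) else 1))|
      ≤ 1 - 2*α := by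
  rw [corr_formula]
  obtain ⟨h0, h2⟩ := hα
  have hL0 : (0:ℝ) ≤ 1 - 2*α := by linarith
  have hL1 : 1 - 2*α ≤ 1 := by linarith
  calc |∑ S : Finset (Fin n), (1 - 2*α)^S.card * (fhat n b S * fhat n b' S)|
      ≤ ∑ S : Finset (Fin n), |(1 - 2*α)^S.card * (fhat n b S * fhat n b' S)| :=
        Finset.abs_sum_le_sum_abs _ _
    _ ≤ ∑ S : Finset (Fin n), (1 - 2*α) * (|fhat n b S| * |fhat n b' S|) := by
        refine Finset.sum_le_sum (fun S _ => ?_)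
        rw [abs_mul, abs_mul]
        by_cases hS : S = ∅
        · subst hS
          rw [fhat_empty n b hb]
          simp
        · have hcard : 1 ≤ S.card := Finset.card_pos.mpr (Finset.nonempty_of_ne_empty hS)
          have : |(1 - 2*α)^S.card| ≤ 1 - 2*α := by
            rw [abs_pow, abs_of_nonneg hL0]
            calc (1 - 2*α)^S.card ≤ (1 - 2*α)^1 := pow_le_pow_of_le_one hL0 hL1 hcard
              _ = 1 - 2*α := pow_one _
          exact mul_le_mul_of_nonneg_right this (mul_nonneg (abs_nonneg _) (abs_nonneg _))
    _ = (1 - 2*α) * ∑ S : Finset (Fin n), |fhat n b S| * |fhat n b' S| := by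
        rw [Finset.mul_sum]
    _ ≤ (1 - 2*α) * 1 := by
        refine mul_le_mul_of_nonneg_left ?_ hL0
        have hcs := Finset.sum_mul_sq_le_sq_mul_sq Finset.univ
          (fun S : Finset (Fin n) => |fhat n b S|) (fun S => |fhat n b' S|)
        have hp1 : ∑ S : Finset (Fin n), |fhat n b S|^2 = 1 := by
          rw [← parseval n b]
          exact Finset.sum_congr rfl (fun S _ => by rw [sq_abs]; ring)
        have hp2 : ∑ S : Finset (Fin n), |fhat n b' S|^2 = 1 := by
          rw [← parseval n b']
          exact Finset.sum_congr rfl (fun S _ => by rw [sq_abs]; ring)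
        rw [hp1, hp2, mul_one] at hcs
        have hnn : 0 ≤ ∑ S : Finset (Fin n), |fhat n b S| * |fhat n b' S| :=
          Finset.sum_nonneg (fun S _ => mul_nonneg (abs_nonneg _) (abs_nonneg _))
        nlinarith
    _ = 1 - 2*α := mul_one _

lemma jointP_rowsum (n : ℕ) (α : ℝ) (x : Fin n → Bool) :
    ∑ y : Fin n → Bool, jointP n α x y = ((1:ℝ)/2)^n := by
  unfold jointP
  rw [← Finset.mul_sum]
  have := sum_pi_bool (fun i c => if x i = c then 1 - α else α)
  rw [this]
  have h1 : ∀ i : Fin n, ((if x i = false then 1 - α else α) + (if x i = true then 1 - α else α)) = 1 :=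
    fun i => by cases hx : x i <;> simp [hx] <;> ring
  rw [Finset.prod_congr rfl (fun i _ => h1 i), Finset.prod_const_one, mul_one]

lemma jointP_colsum (n : ℕ) (α : ℝ) (y : Fin n → Bool) :
    ∑ x : Fin n → Bool, jointP n α x y = ((1:ℝ)/2)^n := by
  unfold jointP
  rw [← Finset.mul_sum]
  have := sum_pi_bool (fun i c => if c = y i then 1 - α else α)
  rw [this]
  have h1 : ∀ i : Fin n, ((if false = y i then 1 - α else α) + (if true = y i then 1 - α else α)) = 1 :=
    fun i => by cases hy : y i <;> simp [hy] <;> ring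
  rw [Finset.prod_congr rfl (fun i _ => h1 i), Finset.prod_const_one, mul_one]

lemma jointP_nonneg (n : ℕ) (α : ℝ) (h0 : 0 ≤ α) (h1 : α ≤ 1) (x y : Fin n → Bool) :
    0 ≤ jointP n α x y := by
  unfold jointP
  refine mul_nonneg (by positivity) (Finset.prod_nonneg (fun i _ => ?_))
  by_cases h : x i = y i <;> simp [h] <;> linarith

lemma pJoint2_nonneg (n : ℕ) (α : ℝ) (h0 : 0 ≤ α) (h1 : α ≤ 1)
    (b b' : (Fin n → Bool) → Bool) (u v : Bool) : 0 ≤ pJoint2 n α b b' u v := by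
  refine Finset.sum_nonneg (fun x _ => Finset.sum_nonneg (fun y _ => ?_))
  by_cases h : b x = u ∧ b' y = v
  · rw [if_pos h]; exact jointP_nonneg n α h0 h1 x y
  · rw [if_neg h]

lemma pJoint2_row (n : ℕ) (α : ℝ) (b b' : (Fin n → Bool) → Bool) (u : Bool) :
    pJoint2 n α b b' u false + pJoint2 n α b b' u true = pB n b u := by
  unfold pJoint2 pB
  rw [← Finset.sum_add_distrib]
  refine Finset.sum_congr rfl (fun x _ => ?_)
  rw [← Finset.sum_add_distrib]
  have h1 : ∀ y : Fin n → Bool,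
      ((if b x = u ∧ b' y = false then jointP n α x y else 0)
        + (if b x = u ∧ b' y = true then jointP n α x y else 0))
      = (if b x = u then jointP n α x y else 0) := by
    intro y
    by_cases hx : b x = u <;> cases hy : b' y <;> simp [hx, hy]
  rw [Finset.sum_congr rfl (fun y _ => h1 y)]
  by_cases hx : b x = u
  · simp only [hx, if_true, if_pos]
    exact jointP_rowsum n α x
  · simp [hx]

lemma pJoint2_col (n : ℕ) (α : ℝ) (b b' : (Fin n → Bool) → Bool) (v : Bool) :
    pJoint2 n α b b' false v + pJoint2 n α b b' true v = pB n b' v := by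
  unfold pJoint2
  rw [← Finset.sum_add_distrib]
  have h1 : ∀ x : Fin n → Bool,
      (∑ y : Fin n → Bool, if b x = false ∧ b' y = v then jointP n α x y else 0)
        + (∑ y : Fin n → Bool, if b x = true ∧ b' y = v then jointP n α x y else 0)
      = ∑ y : Fin n → Bool, (if b' y = v then jointP n α x y else 0) := by
    intro x
    rw [← Finset.sum_add_distrib]
    refine Finset.sum_congr rfl (fun y _ => ?_)
    by_cases hy : b' y = v <;> cases hx : b x <;> simp [hx, hy]
  rw [Finset.sum_congr rfl (fun x _ => h1 x), Finset.sum_comm]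
  unfold pB
  refine Finset.sum_congr rfl (fun y _ => ?_)
  by_cases hy : b' y = v
  · simp only [hy, if_true, if_pos]
    exact jointP_colsum n α y
  · simp [hy]

lemma corr_pJoint2 (n : ℕ) (α : ℝ) (b b' : (Fin n → Bool) → Bool) :
    ∑ x : Fin n → Bool, ∑ y : Fin n → Bool,
      jointP n α x y * ((if b x then (-1:ℝ) else 1) * (if b' y then (-1:ℝ) else 1))
    = pJoint2 n α b b' false false - pJoint2 n α b b' false true
      - pJoint2 n α b b' true false + pJoint2 n α b b' true true := by
  unfold pJoint2
  rw [← Finset.sum_sub_distrib, ← Finset.sum_sub_distrib, ← Finset.sum_add_distrib]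
  refine Finset.sum_congr rfl (fun x _ => ?_)
  rw [← Finset.sum_sub_distrib, ← Finset.sum_sub_distrib, ← Finset.sum_add_distrib]
  refine Finset.sum_congr rfl (fun y _ => ?_)
  cases hx : b x <;> cases hy : b' y <;> simp [hx, hy] <;> ring

lemma f2_half : f2 (1/2) = 1/2 := by
  unfold f2
  rw [one_div, Real.logb_inv, Real.logb_self_eq_one (by norm_num)]
  norm_num

lemma f2_double (q : ℝ) (hq : 0 ≤ q) : 2 * f2 (q/2) = f2 q + q := by
  rcases eq_or_lt_of_le hq with h | h
  · rw [← h]; unfold f2; norm_num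
  · unfold f2
    rw [Real.logb_div (ne_of_gt h) (by norm_num)]
    rw [Real.logb_self_eq_one (by norm_num)]
    ring

lemma binEnt_eq (p : ℝ) : binEnt p = Real.binEntropy p / Real.log 2 := by
  unfold binEnt f2 Real.binEntropy Real.logb
  rw [Real.log_inv, Real.log_inv]
  ring

lemma binEnt_mono (α q : ℝ) (h0 : 0 ≤ α) (h2 : α ≤ 1/2) (hl : α ≤ q) (hr : q ≤ 1 - α) :
    binEnt α ≤ binEnt q := by
  rw [binEnt_eq, binEnt_eq, div_le_div_iff_of_pos_right (Real.log_pos (by norm_num))]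
  have hmono := Real.binEntropy_strictMonoOn.monotoneOn
  by_cases hq : q ≤ 1/2
  · exact hmono (Set.mem_Icc.mpr ⟨h0, by norm_num; linarith⟩)
      (Set.mem_Icc.mpr ⟨by linarith, by norm_num; linarith⟩) hl
  · rw [← Real.binEntropy_one_sub q]
    exact hmono (Set.mem_Icc.mpr ⟨h0, by norm_num; linarith⟩)
      (Set.mem_Icc.mpr ⟨by linarith, by norm_num; linarith⟩) (by linarith)

lemma HB_eq_one (n : ℕ) (b : (Fin n → Bool) → Bool) (hb : pB n b false = 1/2) :
    HB n b = 1 := by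
  have hbt : pB n b true = 1/2 := by have := pB_add n b; linarith
  unfold HB
  rw [Fintype.sum_bool, hb, hbt, f2_half]
  norm_num

theorem balanced_two_function_bound_aux (n : ℕ) (α : ℝ)
    (hα : α ∈ Set.Icc (0:ℝ) (1/2)) (b b' : (Fin n → Bool) → Bool)
    (hb : pB n b false = 1/2) (hb' : pB n b' false = 1/2) :
    MI2 n α b b' ≤ 1 - binEnt α := by
  obtain ⟨h0, h2⟩ := hα
  have h1 : α ≤ 1 := by linarith
  have hbt : pB n b true = 1/2 := by have := pB_add n b; linarith
  have hrowf := pJoint2_row n α b b' false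
  have hrowt := pJoint2_row n α b b' true
  have hcolf := pJoint2_col n α b b' false
  rw [hb] at hrowf
  rw [hbt] at hrowt
  rw [hb'] at hcolf
  have hp01 : pJoint2 n α b b' false true = 1/2 - pJoint2 n α b b' false false := by linarith
  have hp10 : pJoint2 n α b b' true false = 1/2 - pJoint2 n α b b' false false := by linarith
  have hp11 : pJoint2 n α b b' true true = pJoint2 n α b b' false false := by linarith
  have hnn00 := pJoint2_nonneg n α h0 h1 b b' false false
  have hnn01 := pJoint2_nonneg n α h0 h1 b b' false true
  have hub : pJoint2 n α b b' false false ≤ 1/2 := by rw [hp01] at hnn01; linarith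
  have hcorr := corr_bound n α ⟨h0, h2⟩ b b' hb hb'
  rw [corr_pJoint2, hp01, hp10, hp11, abs_le] at hcorr
  obtain ⟨hcl, hcr⟩ := hcorr
  have hql : α ≤ 2 * pJoint2 n α b b' false false := by linarith
  have hqr : 2 * pJoint2 n α b b' false false ≤ 1 - α := by linarith
  unfold MI2
  rw [HB_eq_one n b hb, HB_eq_one n b' hb']
  have hJ : ∑ u : Bool, ∑ v : Bool, f2 (pJoint2 n α b b' u v)
      = 2 * f2 (pJoint2 n α b b' false false)
        + 2 * f2 (1/2 - pJoint2 n α b b' false false) := by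
    rw [Fintype.sum_bool, Fintype.sum_bool, Fintype.sum_bool, hp01, hp10, hp11]
    ring
  rw [hJ]
  have e1 := f2_double (2 * pJoint2 n α b b' false false) (by linarith)
  have e2 := f2_double (1 - 2 * pJoint2 n α b b' false false) (by linarith)
  have r1 : (2 * pJoint2 n α b b' false false) / 2 = pJoint2 n α b b' false false := by ring
  have r2 : (1 - 2 * pJoint2 n α b b' false false) / 2
      = 1/2 - pJoint2 n α b b' false false := by ring
  rw [r1] at e1
  rw [r2] at e2
  have hid : 2 * f2 (pJoint2 n α b b' false false)
      + 2 * f2 (1/2 - pJoint2 n α b b' false false)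
      = 1 + binEnt (2 * pJoint2 n α b b' false false) := by
    unfold binEnt
    linarith
  rw [hid]
  have hmono := binEnt_mono α (2 * pJoint2 n α b b' false false) h0 h2 hql hqr
  linarith

/-- If both `b(Xⁿ)` and `b'(Yⁿ)` are Bernoulli(1/2), then
`I(b(Xⁿ); b'(Yⁿ)) ≤ 1 - H(α)`. -/
theorem balanced_two_function_bound (n : ℕ) (α : ℝ)
    (hα : α ∈ Set.Icc (0:ℝ) (1/2)) (b b' : (Fin n → Bool) → Bool)
    (hb : pB n b false = 1/2) (hb' : pB n b' false = 1/2) :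
    MI2 n α b b' ≤ 1 - binEnt α :=
  balanced_two_function_bound_aux n α hα b b' hb hb'
end

section
/- If a set B \subseteq \{0,1\}^n is \mathcal{I}-compressed (i.e., C_{\mathcal{I}}(B) = B), then B is \mathcal{J}-compressed for every subset \mathcal{J} \subseteq \mathcal{I}. -/
open Finset
open Finset.Colex

/-- Fill the coordinates in `I` of `x` with the pattern `z`. -/
def merge {n : ℕ} (I : Finset (Fin n)) (x : Fin n → Bool)
    (z : {i // i ∈ I} → Bool) : Fin n → Bool :=
  fun i => if h : i ∈ I then z ⟨i, h⟩ else x i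

/-- The `I`-section of `B` at `x`: the set of patterns on the coordinates of `I`
which complete the off-`I` part of `x` to an element of `B`. -/
def Isection {n : ℕ} (B : Finset (Fin n → Bool)) (I : Finset (Fin n))
    (x : Fin n → Bool) : Finset ({i // i ∈ I} → Bool) :=
  Finset.univ.filter (fun z => merge I x z ∈ B)

/-- Numeric value of a pattern on the coordinates of `I`, with smaller indices more
significant: a pattern precedes another in the lexicographic order iff its value is
smaller, so the initial segment `L_{|I|}(M)` is exactly `{z ∣ secVal I z < M}`. -/
def secVal {n : ℕ} (I : Finset (Fin n)) (z : {i // i ∈ I} → Bool) : ℕ :=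
  ∑ i : {i // i ∈ I}, if z i then 2 ^ (I.filter (fun j => i.val < j)).card else 0

/-- The `I`-compression `C_I(B)`: each `I`-section of `B` is replaced by the initial
segment of the same cardinality in the lexicographic order on patterns. -/
def compress {n : ℕ} (I : Finset (Fin n)) (B : Finset (Fin n → Bool)) :
    Finset (Fin n → Bool) :=
  Finset.univ.filter (fun y => secVal I (fun i => y i.val) < (Isection B I y).card)

def wval {α : Type*} [Fintype α] (a : α → ℕ) (z : α → Bool) : ℕ :=
  ∑ i : α, if z i then 2 ^ a i else 0


set_option linter.unusedSectionVars false
section aux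
variable {α : Type*} [Fintype α] [LinearOrder α]


lemma wval_eq_geomSum (a : α → ℕ) (ha : Function.Injective a) (z : α → Bool) :
    wval a z = ∑ k ∈ (Finset.univ.filter (fun i => z i = true)).image a, 2 ^ k := by
  rw [Finset.sum_image (fun x _ y _ h => ha h), wval, Finset.sum_filter]

lemma anti_inj (a : α → ℕ) (ha : ∀ i j : α, i < j → a j < a i) : Function.Injective a := by
  intro i j hij
  rcases lt_trichotomy i j with h|h|h
  · exact absurd hij (ha i j h).ne'
  · exact h
  · exact absurd hij (ha j i h).ne

lemma wval_lt_colex (a : α → ℕ) (ha : ∀ i j : α, i < j → a j < a i) (z z' : α → Bool) :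
    (wval a z < wval a z' ↔
      toColex ((Finset.univ.filter (fun i => z i = true)).map OrderDual.toDual.toEmbedding) <
      toColex ((Finset.univ.filter (fun i => z' i = true)).map OrderDual.toDual.toEmbedding)) := by
  rw [wval_eq_geomSum a (anti_inj a ha), wval_eq_geomSum a (anti_inj a ha),
    Finset.geomSum_lt_geomSum_iff_toColex_lt_toColex le_rfl]
  have himg : ∀ s : Finset α, (s.map OrderDual.toDual.toEmbedding).image
      (fun i : αᵒᵈ => a (OrderDual.ofDual i)) = s.image a := by
    intro s; ext k; simp
  rw [← himg, ← himg]
  exact Finset.Colex.toColex_image_lt_toColex_image (f := fun i : αᵒᵈ => a (OrderDual.ofDual i))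
    (fun i j hij => ha j i hij)

lemma wval_lt_iff (a b : α → ℕ) (ha : ∀ i j : α, i < j → a j < a i)
    (hb : ∀ i j : α, i < j → b j < b i) (z z' : α → Bool) :
    (wval a z < wval a z' ↔ wval b z < wval b z') := by
  rw [wval_lt_colex a ha, wval_lt_colex b hb]

lemma wval_inj (a : α → ℕ) (ha : ∀ i j : α, i < j → a j < a i) :
    Function.Injective (wval a) := by
  intro z z' hzz
  have h1 := wval_lt_iff a a ha ha z z'
  have h2 := wval_lt_iff a a ha ha z' z
  have hfil : (Finset.univ.filter (fun i => z i = true)) =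
      (Finset.univ.filter (fun i => z' i = true)) := by
    apply Finset.image_injective (anti_inj a ha)
    have e1 := wval_eq_geomSum a (anti_inj a ha) z
    have e2 := wval_eq_geomSum a (anti_inj a ha) z'
    have e3 : (∑ k ∈ (Finset.univ.filter (fun i => z i = true)).image a, 2 ^ k)
        = ∑ k ∈ (Finset.univ.filter (fun i => z' i = true)).image a, 2 ^ k := by
      rw [← e1, ← e2, hzz]
    exact Finset.geomSum_injective le_rfl e3
  funext i
  have := Finset.ext_iff.1 hfil i
  simp only [Finset.mem_filter, Finset.mem_univ, true_and] at this
  cases hz : z i <;> cases hz' : z' i <;> simp_all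

lemma wval_lt_pow (a : α → ℕ) (ha : Function.Injective a)
    (hbound : ∀ i, a i < Fintype.card α) (z : α → Bool) :
    wval a z < 2 ^ Fintype.card α := by
  rw [wval_eq_geomSum a ha]
  apply Nat.geomSum_lt le_rfl
  intro k hk
  simp only [Finset.mem_image] at hk
  obtain ⟨i, _, rfl⟩ := hk
  exact hbound i

lemma wval_surj [DecidableEq α] (a : α → ℕ) (ha : ∀ i j : α, i < j → a j < a i)
    (hbound : ∀ i, a i < Fintype.card α) :
    ∀ m < 2 ^ Fintype.card α, ∃ z, wval a z = m := by
  intro m hm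
  let F : (α → Bool) → Fin (2 ^ Fintype.card α) :=
    fun z => ⟨wval a z, wval_lt_pow a (anti_inj a ha) hbound z⟩
  have hFinj : Function.Injective F := by
    intro z z' hzz
    exact wval_inj a ha (congrArg Fin.val hzz)
  have hcard : Fintype.card (α → Bool) = Fintype.card (Fin (2 ^ Fintype.card α)) := by
    simp [Fintype.card_fun]
  have hFsurj : Function.Surjective F :=
    ((Fintype.bijective_iff_injective_and_card F).2 ⟨hFinj, hcard⟩).2
  obtain ⟨z, hz⟩ := hFsurj ⟨m, hm⟩
  exact ⟨z, congrArg Fin.val hz⟩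
end aux


lemma sum_subtype_dite {n : ℕ} (K : Finset (Fin n)) (f : {i // i ∈ K} → ℕ) :
    ∑ i : {i // i ∈ K}, f i = ∑ i ∈ K, if h : i ∈ K then f ⟨i, h⟩ else 0 := by
  rw [Finset.univ_eq_attach,
    ← Finset.sum_attach K (fun i => if h : i ∈ K then f ⟨i, h⟩ else 0)]
  exact Finset.sum_congr rfl fun x _ => by rw [dif_pos x.2]


/-- If `B` is `I`-compressed, then `B` is `J`-compressed for every `J ⊆ I`. -/
theorem compressed_subset {n : ℕ} (B : Finset (Fin n → Bool)) (I : Finset (Fin n))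
    (h : compress I B = B) :
    ∀ J ⊆ I, compress J B = B := by
  intro J hJ
  have hB : ∀ (x : Fin n → Bool) (z : {i // i ∈ I} → Bool),
      merge I x z ∈ B ↔ secVal I z < (Isection B I x).card := by
    intro x z
    have h1 : (fun i : {i // i ∈ I} => merge I x z i.val) = z := by
      funext i; simp [merge, i.prop]
    have h2 : Isection B I (merge I x z) = Isection B I x := by
      unfold Isection
      apply Finset.filter_congr
      intro z' _
      have hm : merge I (merge I x z) z' = merge I x z' := by
        funext j; by_cases hj : j ∈ I <;> simp [merge, hj]
      rw [hm]
    conv_lhs => rw [← h]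
    simp only [compress, mem_filter, mem_univ, true_and, h1, h2]
  ext y
  simp only [compress, mem_filter, mem_univ, true_and]
  set M := (Isection B I y).card with hM
  set a : {i // i ∈ J} → ℕ := fun i => (J.filter (fun j => i.val < j)).card with haa
  set b : {i // i ∈ J} → ℕ := fun i => (I.filter (fun j => i.val < j)).card with hbb
  have ha : ∀ i j : {i // i ∈ J}, i < j → a j < a i := by
    intro i j hij
    apply Finset.card_lt_card
    constructor
    · intro k hk
      simp only [mem_filter] at hk ⊢
      exact ⟨hk.1, lt_trans hij hk.2⟩
    · intro hsub
      have : (j : Fin n) ∈ J.filter (fun k => i.val < k) := by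
        simp only [mem_filter]; exact ⟨j.2, hij⟩
      have := hsub this
      simp only [mem_filter] at this
      exact absurd this.2 (lt_irrefl _)
  have hb : ∀ i j : {i // i ∈ J}, i < j → b j < b i := by
    intro i j hij
    apply Finset.card_lt_card
    constructor
    · intro k hk
      simp only [mem_filter] at hk ⊢
      exact ⟨hk.1, lt_trans hij hk.2⟩
    · intro hsub
      have : (j : Fin n) ∈ I.filter (fun k => i.val < k) := by
        simp only [mem_filter]; exact ⟨hJ j.2, hij⟩
      have := hsub this
      simp only [mem_filter] at this
      exact absurd this.2 (lt_irrefl _)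
  have habound : ∀ i : {i // i ∈ J}, a i < Fintype.card {i // i ∈ J} := by
    intro i
    rw [Fintype.card_coe]
    show (J.filter (fun j => i.val < j)).card < J.card
    have hsub : J.filter (fun j => i.val < j) ⊆ J.erase i.val := by
      intro k hk
      simp only [mem_filter] at hk
      exact Finset.mem_erase.2 ⟨(hk.2).ne', hk.1⟩
    have h1 := Finset.card_le_card hsub
    have h2 : (J.erase i.val).card < J.card := Finset.card_erase_lt_of_mem i.2
    omega
  set e : ({i // i ∈ J} → Bool) → ({i // i ∈ I} → Bool) := fun z i =>
    if hi : i.val ∈ J then z ⟨i.val, hi⟩ else y i.val with he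
  have hmerge : ∀ z, merge J y z = merge I y (e z) := by
    intro z; funext j
    by_cases hj : j ∈ J
    · simp [merge, hj, hJ hj, he]
    · by_cases hj' : j ∈ I <;> simp [merge, hj, hj', he]
  -- decomposition
  set c : ℕ := ∑ i ∈ I \ J, (if hi : i ∈ I then
      (if y i then 2 ^ (I.filter (fun j => i < j)).card else 0) else 0) with hcdef
  have hdecomp : ∀ z, secVal I (e z) = c + wval b z := by
    intro z
    have h1 : secVal I (e z) = ∑ i ∈ I, (if hi : i ∈ I then
        (if e z ⟨i, hi⟩ then 2 ^ (I.filter (fun j => i < j)).card else 0) else 0) :=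
      sum_subtype_dite I _
    have h2 : wval b z = ∑ i ∈ J, (if hi : i ∈ J then
        (if z ⟨i, hi⟩ then 2 ^ (I.filter (fun j => i < j)).card else 0) else 0) :=
      sum_subtype_dite J _
    rw [h1, ← Finset.sum_sdiff hJ, h2]
    congr 1
    · apply Finset.sum_congr rfl
      intro i hi
      rw [Finset.mem_sdiff] at hi
      rw [dif_pos hi.1, dif_pos hi.1]
      have : e z ⟨i, hi.1⟩ = y i := dif_neg hi.2
      rw [this]
    · apply Finset.sum_congr rfl
      intro i hi
      rw [dif_pos (hJ hi), dif_pos hi]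
      have : e z ⟨i, hJ hi⟩ = z ⟨i, hi⟩ := dif_pos hi
      rw [this]
  have hsvJ : ∀ z, secVal J z = wval a z := fun z => rfl
  -- section identification
  have hsec : Isection B J y = univ.filter (fun z => c + wval b z < M) := by
    ext z
    simp only [Isection, mem_filter, mem_univ, true_and]
    rw [hmerge, hB, ← hdecomp]
  -- y in B iff
  have hyI : merge I y (e fun i => y i.val) = y := by
    funext j
    by_cases hj : j ∈ I
    · by_cases hj' : j ∈ J <;> simp [merge, hj, hj', he]
    · simp [merge, hj]
  have hyB : (y ∈ B ↔ c + wval b (fun i : {i // i ∈ J} => y i.val) < M) := by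
    rw [← hdecomp]
    conv_lhs => rw [← hyI]
    exact hB y _
  rw [hsec, hsvJ]
  set S := univ.filter (fun z : {i // i ∈ J} → Bool => c + wval b z < M) with hSdef
  have hdown : ∀ z ∈ S, ∀ z', wval a z' < wval a z → z' ∈ S := by
    intro z hz z' hlt
    simp only [hSdef, mem_filter, mem_univ, true_and] at hz ⊢
    have := (wval_lt_iff a b ha hb z' z).1 hlt
    omega
  have hzbound : ∀ z : {i // i ∈ J} → Bool, wval a z < 2 ^ Fintype.card {i // i ∈ J} :=
    wval_lt_pow a (anti_inj a ha) habound
  have himg : S.image (wval a) = Finset.range S.card := by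
    have hcardT : (S.image (wval a)).card = S.card :=
      Finset.card_image_of_injective S (wval_inj a ha)
    apply Finset.eq_of_subset_of_card_le
    · intro k hk
      rw [Finset.mem_range]
      have hsub : Finset.range (k + 1) ⊆ S.image (wval a) := by
        intro m hm
        rw [Finset.mem_range] at hm
        obtain ⟨z, hzS, hzk⟩ := Finset.mem_image.1 hk
        rcases Nat.lt_succ_iff_lt_or_eq.1 hm with hmk | rfl
        · obtain ⟨z', hz'⟩ := wval_surj a ha habound m (lt_trans (hzk ▸ hmk) (hzbound z))
          exact Finset.mem_image.2 ⟨z', hdown z hzS z' (by omega), hz'⟩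
        · exact Finset.mem_image.2 ⟨z, hzS, hzk⟩
      have := Finset.card_le_card hsub
      rw [Finset.card_range] at this
      omega
    · rw [Finset.card_range, hcardT]
  constructor
  · intro hlt
    rw [hyB]
    have : wval a (fun i : {i // i ∈ J} => y i.val) ∈ Finset.range S.card :=
      Finset.mem_range.2 hlt
    rw [← himg] at this
    obtain ⟨z, hzS, hz⟩ := Finset.mem_image.1 this
    have hzz : z = fun i : {i // i ∈ J} => y i.val := wval_inj a ha hz
    rw [← hzz]
    simpa [hSdef, mem_filter] using hzS
  · intro hyb
    have hmem : (fun i : {i // i ∈ J} => y i.val) ∈ S := by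
      simp only [hSdef, mem_filter, mem_univ, true_and]
      exact hyB.1 hyb
    have : wval a (fun i : {i // i ∈ J} => y i.val) ∈ S.image (wval a) :=
      Finset.mem_image_of_mem _ hmem
    rw [himg, Finset.mem_range] at this
    exact this
end

section
/- One-dimensional compression does not decrease mutual information: for any Boolean function b: \{0,1\}^n \to \{0,1\} and any coordinate i, if \hat{b} is the Boolean function with \hat{b}^{-1}(0) = C_{\{i\}}(b^{-1}(0)), then I(\hat{b}(X^n); Y^n) \ge I(b(X^n); Y^n). -/
open Finset

/-!
Split `x ∈ {0,1}ⁿ` as `(xᵢ, x')`. Compression along `i` replaces the pair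
`(b(0,x'), b(1,x'))` by `(min, max)` of it, a permutation, so the law of `b(Xⁿ)` is unchanged.
For the posteriors `P(y) = Pr{b(Xⁿ) = 0 ∣ Yⁿ = y}` at `y = (0,y')` and `y = (1,y')` the sum is
unchanged too, while the difference `(1 - 2α) ∑ₓ' (1[b(0,x') = 0] - 1[b(1,x') = 0]) w(x',y')`
becomes `(1 - 2α) ∑ₓ' |…| w(x',y')`, which is at least as large in absolute value. A pair of points
in `[0,1]` spread apart with the same sum has smaller total binary entropy by concavity, so
`H(b(Xⁿ) ∣ Yⁿ)` does not increase.
-/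

lemma Bool.apply_and_add_apply_or {M : Type*} [AddCommMonoid M] (F : Bool → M) (a c : Bool) :
    F (a && c) + F (a || c) = F a + F c := by
  cases a <;> cases c <;> simp [add_comm]

lemma ConcaveOn.add_le_add_of_abs_sub_le {s : Set ℝ} {f : ℝ → ℝ} (hf : ConcaveOn ℝ s f)
    {p₀ p₁ q₀ q₁ : ℝ} (hq₀ : q₀ ∈ s) (hq₁ : q₁ ∈ s) (hsum : p₀ + p₁ = q₀ + q₁)
    (hdiff : |p₀ - p₁| ≤ q₀ - q₁) : f q₀ + f q₁ ≤ f p₀ + f p₁ := by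
  wlog hp : p₁ ≤ p₀ generalizing p₀ p₁
  · rw [add_comm (f p₀)]
    exact this (by linarith) (by rwa [abs_sub_comm]) (by linarith)
  rw [abs_of_nonneg (sub_nonneg.2 hp)] at hdiff
  obtain ⟨a, c, ha, hc, hac, hp₀⟩ :
      p₀ ∈ segment ℝ q₀ q₁ := segment_symm ℝ q₁ q₀ ▸ Icc_subset_segment ⟨by linarith, by linarith⟩
  simp only [smul_eq_mul] at hp₀
  have hp₁ : c * q₀ + a * q₁ = p₁ := by linear_combination -hsum - hp₀ + (q₀ + q₁) * hac
  have h₀ := hf.2 hq₀ hq₁ ha hc hac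
  have h₁ := hf.2 hq₀ hq₁ hc ha (by linarith)
  simp only [smul_eq_mul, hp₀, hp₁] at h₀ h₁
  linear_combination h₀ + h₁ - (f q₀ + f q₁) * hac

lemma binEnt_eq_inv_log_two_mul_binEntropy (p : ℝ) :
    binEnt p = (Real.log 2)⁻¹ * Real.binEntropy p := by
  simp only [binEnt, f2, Real.binEntropy_eq_negMulLog_add_negMulLog_one_sub, Real.negMulLog,
    Real.logb]
  ring

lemma concaveOn_binEnt : ConcaveOn ℝ (Set.Icc 0 1) binEnt := by
  rw [show binEnt = (Real.log 2)⁻¹ • Real.binEntropy from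
    funext binEnt_eq_inv_log_two_mul_binEntropy]
  exact Real.strictConcave_binEntropy.concaveOn.smul (by positivity)

section Splitting

variable {n : ℕ} (i : Fin n)

def glue (c : Bool) (x' : {j // j ≠ i} → Bool) : Fin n → Bool :=
  (Equiv.funSplitAt i Bool).symm (c, x')

@[simp] lemma glue_self (c : Bool) (x' : {j // j ≠ i} → Bool) : glue i c x' i = c := by
  simp [glue]

@[simp] lemma glue_of_ne (c : Bool) (x' : {j // j ≠ i} → Bool) (j : {j // j ≠ i}) :
    glue i c x' j = x' j := by
  simp [glue, j.2]

lemma sum_eq_sum_glue {M : Type*} [AddCommMonoid M] (F : (Fin n → Bool) → M) :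
    ∑ x, F x = ∑ x', (F (glue i false x') + F (glue i true x')) := by
  rw [← (Equiv.funSplitAt i Bool).symm.sum_comp, Fintype.sum_prod_type_right]
  simp [glue, add_comm]

lemma merge_singleton_glue (c : Bool) (x' : {j // j ≠ i} → Bool)
    (z : {j // j ∈ ({i} : Finset (Fin n))} → Bool) :
    merge {i} (glue i c x') z = glue i (z ⟨i, mem_singleton_self i⟩) x' := by
  funext j
  by_cases hj : j = i
  · subst hj; simp [merge]
  · simp [merge, hj, glue_of_ne i c x' ⟨j, hj⟩, glue_of_ne i _ x' ⟨j, hj⟩]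

lemma secVal_singleton (z : {j // j ∈ ({i} : Finset (Fin n))} → Bool) :
    secVal {i} z = (z ⟨i, mem_singleton_self i⟩).toNat := by
  rw [secVal, Fintype.sum_unique]
  cases z default <;> simp [filter_singleton]

lemma glue_mem_compress_singleton (B : Finset (Fin n → Bool)) (c : Bool)
    (x' : {j // j ≠ i} → Bool) :
    glue i c x' ∈ compress {i} B ↔ c.toNat < #{d | glue i d x' ∈ B} := by
  have hcard : #(Isection B {i} (glue i c x')) = #{d | glue i d x' ∈ B} :=
    card_equiv (Equiv.funUnique _ Bool) fun z => by
      simp only [Isection, mem_filter, mem_univ, true_and, merge_singleton_glue]; rfl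
  simp [compress, secVal_singleton, hcard]

end Splitting

section Channel

variable {n : ℕ} {α : ℝ}

noncomputable def bsc (α : ℝ) (c d : Bool) : ℝ := if c = d then 1 - α else α

noncomputable def zeroInd (u : Bool) : ℝ := if u = false then 1 else 0

lemma bsc_nonneg (h₀ : 0 ≤ α) (h₁ : α ≤ 1) (c d : Bool) : 0 ≤ bsc α c d := by
  unfold bsc; split_ifs <;> linarith

lemma sum_prod_bsc {ι : Type*} [Fintype ι] [DecidableEq ι] (y : ι → Bool) :
    ∑ x : ι → Bool, ∏ j, bsc α (x j) (y j) = 1 := by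
  rw [← Fintype.prod_sum (fun j c => bsc α c (y j))]
  exact Fintype.prod_eq_one _ fun j => by cases y j <;> simp [bsc]

lemma condP_eq_sum (b : (Fin n → Bool) → Bool) (y : Fin n → Bool) :
    condP n α b y = ∑ x, zeroInd (b x) * ∏ j, bsc α (x j) (y j) := by
  simp only [condP, pBY, jointP, mul_sum, zeroInd]
  refine sum_congr rfl fun x _ => ?_
  split_ifs <;> simp [bsc]

lemma condP_mem_Icc (h₀ : 0 ≤ α) (h₁ : α ≤ 1) (b : (Fin n → Bool) → Bool)
    (y : Fin n → Bool) : condP n α b y ∈ Set.Icc 0 1 := by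
  have hP : ∀ x : Fin n → Bool, 0 ≤ ∏ j, bsc α (x j) (y j) :=
    fun x => prod_nonneg fun j _ => bsc_nonneg h₀ h₁ _ _
  rw [condP_eq_sum]
  refine ⟨sum_nonneg fun x _ => ?_, (sum_prod_bsc (α := α) y).symm ▸ sum_le_sum fun x _ => ?_⟩
  · unfold zeroInd; split_ifs <;> simp [hP x]
  · unfold zeroInd; split_ifs <;> simp [hP x]

lemma condHB_eq_sum_binEnt (b : (Fin n → Bool) → Bool) :
    condHB n α b = ∑ y, (1 / 2) ^ n * binEnt (condP n α b y) := by
  refine sum_congr rfl fun y _ => ?_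
  have hsum : pBY n α b false y + pBY n α b true y = (1 / 2) ^ n := by
    rw [pBY, pBY, ← sum_add_distrib]
    calc _ = ∑ x, (1 / 2) ^ n * ∏ j, bsc α (x j) (y j) :=
          sum_congr rfl fun x _ => by cases b x <;> simp [jointP, bsc]
      _ = _ := by rw [← mul_sum, sum_prod_bsc, mul_one]
  have htrue : (2:ℝ) ^ n * pBY n α b true y = 1 - condP n α b y := by
    rw [condP, eq_sub_iff_add_eq, ← mul_add, add_comm, hsum, ← mul_pow]
    norm_num
  rw [Fintype.sum_bool, htrue, binEnt, add_comm]
  rfl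

lemma prod_bsc_glue (i : Fin n) (c d : Bool) (x' y' : {j // j ≠ i} → Bool) :
    ∏ j, bsc α (glue i c x' j) (glue i d y' j) = bsc α c d * ∏ j, bsc α (x' j) (y' j) := by
  simp [Fintype.prod_eq_mul_prod_subtype_ne _ i]

lemma condP_glue (b : (Fin n → Bool) → Bool) (i : Fin n) (d : Bool) (y' : {j // j ≠ i} → Bool) :
    condP n α b (glue i d y') = ∑ x',
      (zeroInd (b (glue i false x')) * bsc α false d + zeroInd (b (glue i true x')) * bsc α true d)
        * ∏ j, bsc α (x' j) (y' j) := by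
  rw [condP_eq_sum, sum_eq_sum_glue i]
  simp only [prod_bsc_glue]
  exact sum_congr rfl fun x' _ => by ring

lemma condP_glue_add (b : (Fin n → Bool) → Bool) (i : Fin n) (y' : {j // j ≠ i} → Bool) :
    condP n α b (glue i false y') + condP n α b (glue i true y') =
      ∑ x', (zeroInd (b (glue i false x')) + zeroInd (b (glue i true x')))
        * ∏ j, bsc α (x' j) (y' j) := by
  rw [condP_glue, condP_glue, ← sum_add_distrib]
  refine sum_congr rfl fun x' _ => ?_
  simp only [bsc, ↓reduceIte, Bool.true_eq_false, Bool.false_eq_true]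
  ring

lemma condP_glue_sub (b : (Fin n → Bool) → Bool) (i : Fin n) (y' : {j // j ≠ i} → Bool) :
    condP n α b (glue i false y') - condP n α b (glue i true y') =
      (1 - 2 * α) * ∑ x', (zeroInd (b (glue i false x')) - zeroInd (b (glue i true x')))
        * ∏ j, bsc α (x' j) (y' j) := by
  rw [condP_glue, condP_glue, ← sum_sub_distrib, mul_sum]
  refine sum_congr rfl fun x' _ => ?_
  simp only [bsc, ↓reduceIte, Bool.true_eq_false, Bool.false_eq_true]
  ring

lemma zeroInd_and_sub_zeroInd_or (a c : Bool) :
    zeroInd (a && c) - zeroInd (a || c) = |zeroInd a - zeroInd c| := by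
  cases a <;> cases c <;> norm_num [zeroInd]

end Channel

section Compression

variable {n : ℕ} {α : ℝ} {b bhat : (Fin n → Bool) → Bool} {i : Fin n}

lemma compress_glue
    (h : univ.filter (fun x => bhat x = false) =
      compress {i} (univ.filter (fun x => b x = false)))
    (x' : {j // j ≠ i} → Bool) :
    bhat (glue i false x') = (b (glue i false x') && b (glue i true x')) ∧
      bhat (glue i true x') = (b (glue i false x') || b (glue i true x')) := by
  have key : ∀ c, bhat (glue i c x') = false ↔ c.toNat < #{d | b (glue i d x') = false} := by
    intro c
    simpa [← h] using glue_mem_compress_singleton i (univ.filter (fun x => b x = false)) c x'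
  have k0 := key false
  have k1 := key true
  simp only [card_filter, Fintype.sum_bool] at k0 k1
  cases h0 : b (glue i false x') <;> cases h1 : b (glue i true x') <;> simp_all

lemma HB_eq_of_compress
    (h : univ.filter (fun x => bhat x = false) =
      compress {i} (univ.filter (fun x => b x = false))) :
    HB n bhat = HB n b := by
  refine sum_congr rfl fun u _ => congrArg f2 ?_
  rw [pB, pB, sum_eq_sum_glue i, sum_eq_sum_glue i]
  refine sum_congr rfl fun x' _ => ?_
  rw [(compress_glue h x').1, (compress_glue h x').2]
  exact Bool.apply_and_add_apply_or (fun v => if v = u then (1 / 2) ^ n else 0) _ _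

lemma condP_glue_add_of_compress
    (h : univ.filter (fun x => bhat x = false) =
      compress {i} (univ.filter (fun x => b x = false)))
    (y' : {j // j ≠ i} → Bool) :
    condP n α bhat (glue i false y') + condP n α bhat (glue i true y') =
      condP n α b (glue i false y') + condP n α b (glue i true y') := by
  rw [condP_glue_add, condP_glue_add]
  refine sum_congr rfl fun x' _ => ?_
  rw [(compress_glue h x').1, (compress_glue h x').2, Bool.apply_and_add_apply_or zeroInd]

lemma abs_condP_glue_sub_le_of_compress (h₀ : 0 ≤ α) (h₁ : α ≤ 1 / 2)
    (h : univ.filter (fun x => bhat x = false) =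
      compress {i} (univ.filter (fun x => b x = false)))
    (y' : {j // j ≠ i} → Bool) :
    |condP n α b (glue i false y') - condP n α b (glue i true y')| ≤
      condP n α bhat (glue i false y') - condP n α bhat (glue i true y') := by
  rw [condP_glue_sub, condP_glue_sub, abs_mul, abs_of_nonneg (by linarith)]
  refine mul_le_mul_of_nonneg_left ((abs_sum_le_sum_abs _ _).trans_eq ?_) (by linarith)
  refine sum_congr rfl fun x' _ => ?_
  rw [(compress_glue h x').1, (compress_glue h x').2, zeroInd_and_sub_zeroInd_or, abs_mul,
    abs_of_nonneg (prod_nonneg fun j _ => bsc_nonneg h₀ (by linarith) _ _)]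

lemma condHB_le_of_compress (h₀ : 0 ≤ α) (h₁ : α ≤ 1 / 2)
    (h : univ.filter (fun x => bhat x = false) =
      compress {i} (univ.filter (fun x => b x = false))) :
    condHB n α bhat ≤ condHB n α b := by
  rw [condHB_eq_sum_binEnt, condHB_eq_sum_binEnt, sum_eq_sum_glue i, sum_eq_sum_glue i]
  refine sum_le_sum fun y' _ => ?_
  rw [← mul_add, ← mul_add]
  refine mul_le_mul_of_nonneg_left ?_ (by positivity)
  exact concaveOn_binEnt.add_le_add_of_abs_sub_le
    (condP_mem_Icc h₀ (by linarith) bhat _) (condP_mem_Icc h₀ (by linarith) bhat _)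
    (condP_glue_add_of_compress h y').symm (abs_condP_glue_sub_le_of_compress h₀ h₁ h y')

end Compression

/-- One-dimensional compression does not decrease mutual information: if
`b̂⁻¹(0) = C_{i}(b⁻¹(0))` then `I(b̂(Xⁿ); Yⁿ) ≥ I(b(Xⁿ); Yⁿ)`. -/
theorem one_dim_compression (n : ℕ) (α : ℝ) (hα : α ∈ Set.Icc (0:ℝ) (1/2))
    (b bhat : (Fin n → Bool) → Bool) (i : Fin n)
    (h : Finset.univ.filter (fun x => bhat x = false) =
      compress {i} (Finset.univ.filter (fun x => b x = false))) :
    MI n α bhat ≥ MI n α b := by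
  have hHB := HB_eq_of_compress h
  have hcond := condHB_le_of_compress hα.1 hα.2 h
  rw [MI, MI, ge_iff_le, hHB]
  linarith
end

section
/- The function T_\alpha satisfies the self-similarity relation 2 T_\alpha(p) = T_\alpha(2p) + 2 p H(\alpha) for all p \in [0, 1/2]. -/
/-
Prepending a coordinate to a lex function is an "or": for `k ≤ 2ⁿ`,
`lexFun (n+1) k (u, x) = u ∨ lexFun n k x`. Through the memoryless channel this gives
`Pr{b' = 0 | Y = (v, y)} = c_v · Pr{b = 0 | Y = y}` with `{c_0, c_1} = {1 - α, α}`, and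
`f(ab) = a f(b) + b f(a)` splits `T_α(k/2ⁿ⁺¹)` into `(T_α(k/2ⁿ) + (k/2ⁿ) H(α)) / 2`, since the
conditional probability averages to `k/2ⁿ`. So the identity holds at all dyadic points, and
continuity of `T_α` together with the density of the dyadics extends it to `[0, 1/2]`.
-/

open Finset

/-- The numeric value of `x ∈ {0,1}ⁿ` with the first coordinate most significant;
`x ≺_L x'` in the lexicographic order iff `vecVal x < vecVal x'`. -/
def vecVal {n : ℕ} (x : Fin n → Bool) : ℕ :=
  ∑ i : Fin n, if x i then 2 ^ (n - 1 - i.val) else 0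

/-- The unique lex Boolean function on `n` inputs whose preimage of `0` (= `false`)
is the initial segment of size `k` of the lexicographic order on `{0,1}ⁿ`. -/
def lexFun (n k : ℕ) : (Fin n → Bool) → Bool := fun x => decide (k ≤ vecVal x)

/-- `T_α` at the dyadic rational `k/2ⁿ`:
`T_α(k/2ⁿ) = E_{Yⁿ} f(Pr{b(Xⁿ)=0 ∣ Yⁿ})` where `b` is the lex function on `n`
inputs with `Pr{b(Xⁿ)=0} = k/2ⁿ`. -/
noncomputable def Tdy (α : ℝ) (n k : ℕ) : ℝ :=
  ∑ y : Fin n → Bool, (1/2)^n * f2 (condP n α (lexFun n k) y)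

open Filter

lemma f2_mul (a b : ℝ) : f2 (a * b) = a * f2 b + b * f2 a := by
  rcases eq_or_ne a 0 with rfl | ha
  · simp [f2]
  rcases eq_or_ne b 0 with rfl | hb
  · simp [f2]
  simp only [f2, Real.logb, Real.log_mul ha hb]
  ring

lemma sum_fin_succ_pi_cons {α M : Type*} [Fintype α] [AddCommMonoid M] {n : ℕ}
    (g : (Fin (n + 1) → α) → M) :
    ∑ x, g x = ∑ a, ∑ x : Fin n → α, g (Fin.cons a x) := by
  rw [← (Fin.consEquiv fun _ => α).sum_comp g, Fintype.sum_prod_type]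
  rfl

section Lex

variable {n : ℕ}

lemma vecVal_cons (u : Bool) (x : Fin n → Bool) :
    vecVal (Fin.cons u x : Fin (n + 1) → Bool) = (if u then 2 ^ n else 0) + vecVal x := by
  rw [vecVal, Fin.sum_univ_succ]
  congr 1
  refine Finset.sum_congr rfl fun i _ => ?_
  simp only [Fin.cons_succ, Fin.val_succ, add_tsub_cancel_right]
  congr 2
  omega

lemma vecVal_lt (x : Fin n → Bool) : vecVal x < 2 ^ n := by
  induction n with
  | zero => simp [vecVal]
  | succ n ih =>
    rw [← Fin.cons_self_tail x, vecVal_cons, pow_succ]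
    have := ih (Fin.tail x)
    split <;> omega

lemma vecVal_injective : Function.Injective (vecVal (n := n)) := by
  induction n with
  | zero => exact fun x y _ => Subsingleton.elim x y
  | succ n ih =>
    intro x y h
    rw [← Fin.cons_self_tail x, ← Fin.cons_self_tail y, vecVal_cons, vecVal_cons] at h
    have hx := vecVal_lt (Fin.tail x)
    have hy := vecVal_lt (Fin.tail y)
    have h0 : x 0 = y 0 := by
      cases hx0 : x 0 <;> cases hy0 : y 0 <;> simp [hx0, hy0] at h ⊢ <;> omega
    have htail : Fin.tail x = Fin.tail y := ih (by rw [h0] at h; omega)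
    rw [← Fin.cons_self_tail x, ← Fin.cons_self_tail y, h0, htail]

lemma image_vecVal_univ : (univ : Finset (Fin n → Bool)).image vecVal = range (2 ^ n) := by
  refine eq_of_subset_of_card_le (fun a ha => ?_) ?_
  · obtain ⟨x, -, rfl⟩ := mem_image.1 ha
    exact mem_range.2 (vecVal_lt x)
  · rw [card_range, card_image_of_injective _ vecVal_injective]
    simp

lemma card_filter_vecVal_lt {k : ℕ} (hk : k ≤ 2 ^ n) :
    #{x : Fin n → Bool | vecVal x < k} = k := by
  have himage : ({x | vecVal x < k} : Finset (Fin n → Bool)).image vecVal = range k := by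
    rw [← filter_image (p := (· < k)), image_vecVal_univ]
    ext a
    simp only [mem_filter, mem_range]
    omega
  rw [← card_image_of_injective _ vecVal_injective, himage, card_range]

lemma pB_lexFun_false {k : ℕ} (hk : k ≤ 2 ^ n) : pB n (lexFun n k) false = k / 2 ^ n := by
  rw [pB, ← sum_filter, sum_const]
  simp only [lexFun, decide_eq_false_iff_not, not_le]
  rw [card_filter_vecVal_lt hk, nsmul_eq_mul, one_div, inv_pow, div_eq_mul_inv]

lemma lexFun_cons {k : ℕ} (hk : k ≤ 2 ^ n) (u : Bool) (x : Fin n → Bool) :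
    lexFun (n + 1) k (Fin.cons u x) = (u || lexFun n k x) := by
  cases u <;> simp [lexFun, vecVal_cons]
  omega

end Lex

section Channel

variable {n : ℕ} (α : ℝ)

lemma jointP_cons (a b : Bool) (x y : Fin n → Bool) :
    jointP (n + 1) α (Fin.cons a x) (Fin.cons b y)
      = 1 / 2 * (if a = b then 1 - α else α) * jointP n α x y := by
  simp only [jointP, Fin.prod_univ_succ, Fin.cons_zero, Fin.cons_succ, pow_succ]
  ring

lemma pBY_cons {b : (Fin n → Bool) → Bool} {b' : (Fin (n + 1) → Bool) → Bool}
    (hb' : ∀ u x, b' (Fin.cons u x) = (u || b x)) (u : Bool) (y : Fin n → Bool) :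
    pBY (n + 1) α b' false (Fin.cons u y)
      = 1 / 2 * (if u then α else 1 - α) * pBY n α b false y := by
  simp only [pBY, sum_fin_succ_pi_cons, Fintype.sum_bool, hb', jointP_cons, mul_sum]
  cases u <;> simp

lemma condP_cons {b : (Fin n → Bool) → Bool} {b' : (Fin (n + 1) → Bool) → Bool}
    (hb' : ∀ u x, b' (Fin.cons u x) = (u || b x)) (u : Bool) (y : Fin n → Bool) :
    condP (n + 1) α b' (Fin.cons u y) = (if u then α else 1 - α) * condP n α b y := by
  rw [condP, condP, pBY_cons α hb', pow_succ]
  ring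

lemma sum_jointP_right (x : Fin n → Bool) : ∑ y, jointP n α x y = (1 / 2) ^ n := by
  unfold jointP
  rw [← mul_sum, ← Fintype.prod_sum fun i b => if x i = b then 1 - α else α,
    prod_eq_one fun i _ => ?_, mul_one]
  cases x i <;> simp

lemma sum_condP (b : (Fin n → Bool) → Bool) :
    ∑ y, (1 / 2) ^ n * condP n α b y = pB n b false := by
  simp only [condP, pBY, ← mul_assoc, ← mul_pow, one_div,
    inv_mul_cancel₀ (two_ne_zero (α := ℝ)), one_pow, one_mul]
  rw [sum_comm]
  refine sum_congr rfl fun x _ => ?_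
  split_ifs <;> simp [sum_jointP_right]

end Channel

noncomputable def Tbool (n : ℕ) (α : ℝ) (b : (Fin n → Bool) → Bool) : ℝ :=
  ∑ y : Fin n → Bool, (1 / 2) ^ n * f2 (condP n α b y)

lemma two_mul_Tbool_succ {n : ℕ} (α : ℝ) {b : (Fin n → Bool) → Bool}
    {b' : (Fin (n + 1) → Bool) → Bool} (hb' : ∀ u x, b' (Fin.cons u x) = (u || b x)) :
    2 * Tbool (n + 1) α b' = Tbool n α b + pB n b false * binEnt α := by
  rw [Tbool, Tbool, ← sum_condP α b, sum_mul, ← sum_add_distrib, sum_fin_succ_pi_cons,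
    Fintype.sum_bool, ← sum_add_distrib, mul_sum]
  refine sum_congr rfl fun y _ => ?_
  simp only [condP_cons α hb', if_true, Bool.false_eq_true, if_false, f2_mul, binEnt, pow_succ]
  ring

lemma Tdy_succ (α : ℝ) {n k : ℕ} (hk : k ≤ 2 ^ n) :
    2 * Tdy α (n + 1) k = Tdy α n k + k / 2 ^ n * binEnt α := by
  rw [← pB_lexFun_false hk]
  exact two_mul_Tbool_succ α (lexFun_cons hk)

lemma eqOn_Icc_of_forall_dyadic {Y : Type*} [TopologicalSpace Y] [T2Space Y] {f g : ℝ → Y}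
    (hf : ContinuousOn f (Set.Icc 0 1)) (hg : ContinuousOn g (Set.Icc 0 1))
    (h : ∀ n k : ℕ, k ≤ 2 ^ n → f (k / 2 ^ n) = g (k / 2 ^ n)) :
    Set.EqOn f g (Set.Icc 0 1) := by
  refine Set.EqOn.of_subset_closure (s := {q : ℝ | ∃ n k : ℕ, k ≤ 2 ^ n ∧ q = k / 2 ^ n})
    ?_ hf hg ?_ ?_
  · rintro _ ⟨n, k, hk, rfl⟩
    exact h n k hk
  · rintro _ ⟨n, k, hk, rfl⟩
    exact ⟨by positivity, div_le_one_of_le₀ (by exact_mod_cast hk) (by positivity)⟩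
  · rintro p ⟨hp0, hp1⟩
    have hpow : Tendsto (fun n : ℕ => (2 : ℝ) ^ n) atTop atTop :=
      tendsto_pow_atTop_atTop_of_one_lt one_lt_two
    refine mem_closure_of_tendsto ((tendsto_nat_floor_mul_div_atTop hp0).comp hpow)
      (Eventually.of_forall fun n => ⟨n, ⌊p * 2 ^ n⌋₊, ?_, rfl⟩)
    refine Nat.floor_le_of_le ?_
    push_cast
    nlinarith [pow_pos (two_pos (α := ℝ)) n]

theorem T_self_similar_general (α : ℝ) (Tα : ℝ → ℝ)
    (hcont : ContinuousOn Tα (Set.Icc 0 1))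
    (hdy : ∀ n k : ℕ, k ≤ 2^n → Tα ((k:ℝ)/2^n) = Tdy α n k) :
    ∀ p ∈ Set.Icc (0:ℝ) (1/2), 2 * Tα p = Tα (2 * p) + 2 * p * binEnt α := by
  rintro p ⟨hp0, hp1⟩
  have hhalf : Set.MapsTo (· / 2) (Set.Icc (0 : ℝ) 1) (Set.Icc 0 1) :=
    fun q hq => ⟨by linarith [hq.1], by linarith [hq.2]⟩
  have hdyadic : ∀ n k : ℕ, k ≤ 2 ^ n →
      2 * Tα (k / 2 ^ n / 2) = Tα (k / 2 ^ n) + k / 2 ^ n * binEnt α := by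
    intro n k hk
    have hk' : k ≤ 2 ^ (n + 1) := hk.trans (Nat.pow_le_pow_right two_pos n.le_succ)
    rw [div_div, ← pow_succ, hdy _ _ hk', hdy _ _ hk, Tdy_succ α hk]
  have hall := eqOn_Icc_of_forall_dyadic
    (continuousOn_const.mul (hcont.comp (continuousOn_id.div_const 2) hhalf))
    (hcont.add (continuousOn_id.mul continuousOn_const)) hdyadic
    (⟨by linarith, by linarith⟩ : 2 * p ∈ Set.Icc (0 : ℝ) 1)
  simpa [mul_div_cancel_left₀] using hall

/-- Self-similarity of `T_α` (the continuous extension to `[0,1]` of its values at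
dyadic rationals): `2 T_α(p) = T_α(2p) + 2p H(α)` for all `p ∈ [0, 1/2]`. -/
theorem T_self_similar (α : ℝ) (hα : α ∈ Set.Ioo (0:ℝ) (1/2)) (Tα : ℝ → ℝ)
    (hcont : ContinuousOn Tα (Set.Icc 0 1))
    (hdy : ∀ n k : ℕ, k ≤ 2^n → Tα ((k:ℝ)/2^n) = Tdy α n k) :
    ∀ p ∈ Set.Icc (0:ℝ) (1/2), 2 * Tα p = Tα (2 * p) + 2 * p * binEnt α :=
  T_self_similar_general α Tα hcont hdy
end

section
/- Pseudo-concavity of T_\alpha between adjacent dyadic points: for integers k \le 2^n, letting p_- = k/2^n and p_+ = (k+1)/2^n, the midpoint inequality T_\alpha((p_- + p_+)/2) \ge (1/2)[T_\alpha(p_-) + T_\alpha(p_+)] holds; consequently T_\alpha(\theta p_- + (1-\theta) p_+) \ge \theta T_\alpha(p_-) + (1-\theta) T_\alpha(p_+) for all \theta \in [0,1]. -/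
open Finset

-- snoc equivalence
def snocE (n : ℕ) : ((Fin n → Bool) × Bool) ≃ (Fin (n+1) → Bool) where
  toFun p := Fin.snoc p.1 p.2
  invFun f := (Fin.init f, f (Fin.last n))
  left_inv p := by simp [Fin.init_snoc, Fin.snoc_last]
  right_inv f := by simp [Fin.snoc_init_self]

lemma sum_snoc (n : ℕ) (g : (Fin (n+1) → Bool) → ℝ) :
    (∑ z : Fin (n+1) → Bool, g z)
      = ∑ x : Fin n → Bool, ∑ s : Bool, g (Fin.snoc x s) := by
  rw [← (snocE n).sum_comp g]
  rw [Fintype.sum_prod_type]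
  rfl

lemma vecVal_snoc {n : ℕ} (x : Fin n → Bool) (s : Bool) :
    vecVal (Fin.snoc x s) = 2 * vecVal x + (if s then 1 else 0) := by
  unfold vecVal
  rw [Fin.sum_univ_castSucc]
  simp only [Fin.snoc_castSucc, Fin.snoc_last, Fin.coe_castSucc, Fin.val_last]
  rw [Finset.mul_sum]
  congr 1
  · apply Finset.sum_congr rfl
    intro i _
    have hi : i.val < n := i.isLt
    have : n + 1 - 1 - i.val = (n - 1 - i.val) + 1 := by omega
    rw [this]
    split <;> simp [pow_succ] <;> ring
  · simp

lemma lexFun_snoc {n : ℕ} (k : ℕ) (x : Fin n → Bool) (s : Bool) :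
    lexFun (n+1) (2*k+1) (Fin.snoc x s)
      = if s then lexFun n k x else lexFun n (k+1) x := by
  unfold lexFun
  rw [vecVal_snoc]
  cases s <;> simp <;> omega

lemma jointP_snoc {n : ℕ} (α : ℝ) (x y : Fin n → Bool) (s t : Bool) :
    jointP (n+1) α (Fin.snoc x s) (Fin.snoc y t)
      = (1/2) * (if s = t then 1 - α else α) * jointP n α x y := by
  unfold jointP
  rw [Fin.prod_univ_castSucc]
  simp only [Fin.snoc_castSucc, Fin.snoc_last]
  rw [pow_succ]
  ring

lemma pBY_snoc {n : ℕ} (α : ℝ) (k : ℕ) (u : Bool) (y : Fin n → Bool) (t : Bool) :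
    pBY (n+1) α (lexFun (n+1) (2*k+1)) u (Fin.snoc y t)
      = (1/2) * ((if t then 1 - α else α) * pBY n α (lexFun n k) u y
          + (if t then α else 1 - α) * pBY n α (lexFun n (k+1)) u y) := by
  unfold pBY
  rw [sum_snoc]
  have : ∀ x : Fin n → Bool, ∀ s : Bool,
      (if lexFun (n+1) (2*k+1) (Fin.snoc x s) = u
        then jointP (n+1) α (Fin.snoc x s) (Fin.snoc y t) else 0)
      = (1/2) * (if s = t then 1 - α else α) *
          (if (if s then lexFun n k x else lexFun n (k+1) x) = u
            then jointP n α x y else 0) := by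
    intro x s
    rw [lexFun_snoc, jointP_snoc]
    split <;> (split <;> ring)
  simp only [this]
  rw [Finset.sum_comm]
  rw [Fintype.sum_bool]
  rw [← Finset.mul_sum, ← Finset.mul_sum]
  cases t <;> simp <;> ring

lemma condP_snoc {n : ℕ} (α : ℝ) (k : ℕ) (y : Fin n → Bool) (t : Bool) :
    condP (n+1) α (lexFun (n+1) (2*k+1)) (Fin.snoc y t)
      = (if t then 1 - α else α) * condP n α (lexFun n k) y
          + (if t then α else 1 - α) * condP n α (lexFun n (k+1)) y := by
  unfold condP
  rw [pBY_snoc, pow_succ]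
  ring

lemma condP_nonneg {n : ℕ} {α : ℝ} (h0 : 0 ≤ α) (h1 : α ≤ 1)
    (b : (Fin n → Bool) → Bool) (y : Fin n → Bool) : 0 ≤ condP n α b y := by
  unfold condP pBY
  apply mul_nonneg (by positivity)
  apply Finset.sum_nonneg
  intro x _
  split
  · unfold jointP
    apply mul_nonneg (by positivity)
    apply Finset.prod_nonneg
    intro i _
    split <;> linarith
  · exact le_refl 0

lemma f2_eq (x : ℝ) : f2 x = (Real.log 2)⁻¹ • Real.negMulLog x := by
  simp only [f2, Real.negMulLog, Real.logb, smul_eq_mul, neg_mul, div_eq_inv_mul]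
  ring

lemma f2_concave : ConcaveOn ℝ (Set.Ici 0) f2 := by
  have : f2 = fun x => (Real.log 2)⁻¹ • Real.negMulLog x := funext f2_eq
  rw [this]
  exact Real.concaveOn_negMulLog.smul (by positivity)

lemma f2_combo {α a b : ℝ} (h0 : 0 ≤ α) (h1 : α ≤ 1) (ha : 0 ≤ a) (hb : 0 ≤ b) :
    (1 - α) * f2 a + α * f2 b ≤ f2 ((1 - α) * a + α * b) := by
  have := f2_concave.2 ha hb (by linarith : (0:ℝ) ≤ 1 - α) h0 (by ring)
  simpa using this

lemma mid_Tdy (α : ℝ) (h0 : 0 ≤ α) (h1 : α ≤ 1) (n k : ℕ) :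
    (1/2) * (Tdy α n k + Tdy α n (k+1)) ≤ Tdy α (n+1) (2*k+1) := by
  have key : Tdy α (n+1) (2*k+1) = ∑ y : Fin n → Bool, (1/2)^(n+1) *
      (f2 ((1-α) * condP n α (lexFun n k) y + α * condP n α (lexFun n (k+1)) y)
       + f2 ((1-α) * condP n α (lexFun n (k+1)) y + α * condP n α (lexFun n k) y)) := by
    unfold Tdy
    rw [sum_snoc]
    refine Finset.sum_congr rfl fun y _ => ?_
    rw [Fintype.sum_bool, condP_snoc, condP_snoc]
    norm_num
    ring
  have rhs : (1/2) * (Tdy α n k + Tdy α n (k+1)) = ∑ y : Fin n → Bool, (1/2)^(n+1) *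
      (f2 (condP n α (lexFun n k) y) + f2 (condP n α (lexFun n (k+1)) y)) := by
    unfold Tdy
    rw [← Finset.sum_add_distrib, Finset.mul_sum]
    refine Finset.sum_congr rfl fun y _ => ?_
    rw [pow_succ]; ring
  rw [key, rhs]
  refine Finset.sum_le_sum fun y _ => ?_
  have hq1 := condP_nonneg h0 h1 (lexFun n k) y
  have hq0 := condP_nonneg h0 h1 (lexFun n (k+1)) y
  have c1 := f2_combo h0 h1 hq1 hq0
  have c2 := f2_combo h0 h1 hq0 hq1
  have hp : (0:ℝ) ≤ (1/2)^(n+1) := by positivity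
  exact mul_le_mul_of_nonneg_left (by linarith) hp

set_option maxHeartbeats 1000000 in
/-- Pseudo-concavity of `T_α` between adjacent dyadic points `p₋ = k/2ⁿ` and
`p₊ = (k+1)/2ⁿ`: the midpoint inequality
`T_α((p₋+p₊)/2) ≥ (1/2)(T_α(p₋) + T_α(p₊))` holds, and consequently
`T_α(θp₋ + (1-θ)p₊) ≥ θT_α(p₋) + (1-θ)T_α(p₊)` for all `θ ∈ [0,1]`. -/
theorem T_pseudo_concave (α : ℝ) (hα : α ∈ Set.Ioo (0:ℝ) (1/2)) (Tα : ℝ → ℝ)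
    (hcont : ContinuousOn Tα (Set.Icc 0 1))
    (hdy : ∀ n k : ℕ, k ≤ 2^n → Tα ((k:ℝ)/2^n) = Tdy α n k)
    (n k : ℕ) (hk : k + 1 ≤ 2^n) :
    Tα ((((k:ℝ)/2^n) + (((k:ℝ)+1)/2^n)) / 2) ≥
      (1/2) * (Tα ((k:ℝ)/2^n) + Tα (((k:ℝ)+1)/2^n)) ∧
    ∀ θ ∈ Set.Icc (0:ℝ) 1,
      Tα (θ * ((k:ℝ)/2^n) + (1 - θ) * (((k:ℝ)+1)/2^n)) ≥
        θ * Tα ((k:ℝ)/2^n) + (1 - θ) * Tα (((k:ℝ)+1)/2^n) := by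
  obtain ⟨hα0, hα2⟩ := hα
  have h0 : 0 ≤ α := le_of_lt hα0
  have h1 : α ≤ 1 := by linarith
  -- midpoint inequality for adjacent dyadics at any level
  have Hmid : ∀ N K : ℕ, K + 1 ≤ 2^N →
      (1/2) * (Tα ((K:ℝ)/2^N) + Tα (((K:ℝ)+1)/2^N)) ≤
        Tα (((2*K+1 : ℕ):ℝ)/2^(N+1)) := by
    intro N K hK
    have e1 : Tα ((K:ℝ)/2^N) = Tdy α N K := hdy N K (by omega)
    have e2 : Tα (((K:ℝ)+1)/2^N) = Tdy α N (K+1) := by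
      have := hdy N (K+1) hK
      push_cast at this
      exact this
    have e3 : Tα (((2*K+1 : ℕ):ℝ)/2^(N+1)) = Tdy α (N+1) (2*K+1) :=
      hdy (N+1) (2*K+1) (by rw [pow_succ]; omega)
    rw [e1, e2, e3]
    exact mid_Tdy α h0 h1 N K
  set pLo : ℝ := (k:ℝ)/2^n with hpLo
  set pHi : ℝ := ((k:ℝ)+1)/2^n with hpHi
  have h2n : (0:ℝ) < 2^n := by positivity
  -- Part 1
  have part1 : Tα ((pLo + pHi) / 2) ≥ (1/2) * (Tα pLo + Tα pHi) := by
    have hpt : (pLo + pHi) / 2 = ((2*k+1 : ℕ):ℝ)/2^(n+1) := by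
      rw [hpLo, hpHi]
      push_cast
      rw [pow_succ]
      field_simp
      ring
    rw [hpt]
    exact Hmid n k hk
  refine ⟨part1, ?_⟩
  -- Part 2: dyadic induction
  have Hdy2 : ∀ m : ℕ, ∀ j : ℕ, j ≤ 2^m →
      ((j:ℝ)/2^m) * Tα pLo + (1 - (j:ℝ)/2^m) * Tα pHi ≤
        Tα ((((k+1)*2^m - j : ℕ):ℝ)/2^(n+m)) := by
    intro m
    induction m with
    | zero =>
      intro j hj
      interval_cases j
      · simp [hpHi]
      · have : ((k+1)*2^0 - 1 : ℕ) = k := by omega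
        rw [this]
        norm_num [hpLo]
    | succ m IH =>
      intro j hj
      set B : ℕ := (k+1)*2^m with hB
      have hBpow : (k+1)*2^(m+1) = 2*B := by rw [hB, pow_succ]; ring
      have hB2m : 2^m ≤ B := by
        rw [hB]; exact Nat.le_mul_of_pos_left _ (by omega)
      have hBle : B ≤ 2^(n+m) := by
        rw [hB, pow_add]; exact Nat.mul_le_mul_right _ hk
      have hpow : ((2:ℝ))^(n+(m+1)) = 2^(n+m) * 2 := by rw [← pow_succ]; ring_nf
      have h2m : (0:ℝ) < 2^m := by positivity
      rcases Nat.even_or_odd j with ⟨j', hj'⟩ | ⟨j', hj'⟩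
      · -- even: j = 2j'
        have hj'le : j' ≤ 2^m := by omega
        have enum : ((k+1)*2^(m+1) - j : ℕ) = 2*(B - j') := by omega
        have hsub : j' ≤ B := le_trans hj'le hB2m
        have ept : (((2*(B - j') : ℕ)):ℝ)/2^(n+(m+1)) = ((B - j' : ℕ):ℝ)/2^(n+m) := by
          push_cast [Nat.sub_le_iff_le_add]
          rw [hpow]
          field_simp
        have ecoef : ((j:ℝ)/2^(m+1)) = (j':ℝ)/2^m := by
          rw [hj']
          push_cast
          rw [pow_succ]
          field_simp
          ring
        rw [enum, ept, ecoef]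
        have := IH j' hj'le
        rw [hB]
        convert this using 3
      · -- odd: j = 2j'+1
        have hj'lt : j' + 1 ≤ 2^m := by omega
        have hK1 : (B - (j'+1)) + 1 ≤ 2^(n+m) := by omega
        have hKeq : (B - (j'+1)) + 1 = B - j' := by omega
        have enum : ((k+1)*2^(m+1) - j : ℕ) = 2*(B - (j'+1)) + 1 := by omega
        have hmid := Hmid (n+m) (B - (j'+1)) hK1
        have i1 := IH (j'+1) hj'lt
        have i2 := IH j' (by omega)
        -- identify points
        have ept1 : (((B - (j'+1) : ℕ)):ℝ) + 1 = ((B - j' : ℕ):ℝ) := by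
          push_cast [Nat.cast_sub (by omega : j'+1 ≤ B), Nat.cast_sub (by omega : j' ≤ B)]
          ring
        rw [enum]
        rw [ept1] at hmid
        have hc : ((j:ℝ)/2^(m+1)) = (1/2) * (((j':ℝ)+1)/2^m + (j':ℝ)/2^m) := by
          rw [hj']
          push_cast
          rw [pow_succ]
          field_simp
          ring
        rw [hc]
        have i1' : (((j':ℝ)+1)/2^m) * Tα pLo + (1 - ((j':ℝ)+1)/2^m) * Tα pHi ≤
            Tα (((B - (j'+1) : ℕ):ℝ)/2^(n+m)) := by
          have := i1; push_cast at this ⊢; convert this using 4 <;> push_cast <;> ring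
        have i2' : ((j':ℝ)/2^m) * Tα pLo + (1 - (j':ℝ)/2^m) * Tα pHi ≤
            Tα (((B - j' : ℕ):ℝ)/2^(n+m)) := i2
        set c1 : ℝ := ((j':ℝ)+1)/2^m
        set c0 : ℝ := (j':ℝ)/2^m
        have hexp : n + (m+1) = (n+m)+1 := rfl
        rw [hexp]
        nlinarith [hmid, i1', i2']
  -- Part 2 conclusion via continuity
  intro θ hθ
  obtain ⟨hθ0, hθ1⟩ := hθ
  have hpLo0 : 0 ≤ pLo := by rw [hpLo]; positivity
  have hpHile : pHi ≤ 1 := by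
    rw [hpHi, div_le_one h2n]
    have : ((k:ℝ)+1) ≤ (2:ℝ)^n := by
      have := hk
      have h' : ((k+1:ℕ):ℝ) ≤ ((2^n:ℕ):ℝ) := Nat.cast_le.mpr this
      push_cast at h'
      linarith
    linarith
  have hple : pLo ≤ pHi := by
    rw [hpLo, hpHi]
    gcongr
    linarith
  -- the function g
  set g : ℝ → ℝ := fun t => Tα (t * pLo + (1 - t) * pHi) - (t * Tα pLo + (1 - t) * Tα pHi)
    with hg_def
  -- g nonneg on dyadics
  have hgdy : ∀ m j : ℕ, j ≤ 2^m → 0 ≤ g ((j:ℝ)/2^m) := by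
    intro m j hj
    have hpt : ((((k+1)*2^m - j : ℕ)):ℝ)/2^(n+m)
        = ((j:ℝ)/2^m) * pLo + (1 - (j:ℝ)/2^m) * pHi := by
      have hjB : j ≤ (k+1)*2^m := le_trans hj (Nat.le_mul_of_pos_left _ (by omega))
      rw [hpLo, hpHi, Nat.cast_sub hjB]
      push_cast
      rw [pow_add]
      have h2m : (0:ℝ) < 2^m := by positivity
      field_simp
      ring
    have := Hdy2 m j hj
    rw [hpt] at this
    simp only [hg_def]
    linarith
  -- continuity of g on [0,1]
  have hmaps : Set.MapsTo (fun t : ℝ => t * pLo + (1 - t) * pHi) (Set.Icc 0 1) (Set.Icc 0 1) := by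
    intro t ht
    obtain ⟨ht0, ht1⟩ := ht
    simp only [Set.mem_Icc]
    constructor
    · nlinarith [mul_nonneg ht0 hpLo0,
        mul_nonneg (by linarith : (0:ℝ) ≤ 1 - t) (le_trans hpLo0 hple)]
    · nlinarith [mul_le_mul_of_nonneg_left hpHile (by linarith : (0:ℝ) ≤ 1 - t),
        mul_le_mul_of_nonneg_left (le_trans hple hpHile) ht0]
  have hgcont : ContinuousOn g (Set.Icc 0 1) := by
    apply ContinuousOn.sub
    · exact hcont.comp (by fun_prop) hmaps
    · fun_prop
  -- approximating sequence of dyadics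
  set a : ℕ → ℝ := fun i => ((⌊θ * 2^i⌋₊ : ℕ):ℝ)/2^i with ha_def
  have ha_le : ∀ i, a i ≤ θ := by
    intro i
    have h2i : (0:ℝ) < 2^i := by positivity
    rw [ha_def]
    rw [div_le_iff₀ h2i]
    exact Nat.floor_le (by positivity)
  have ha_ge : ∀ i, θ - (1/2)^i ≤ a i := by
    intro i
    have h2i : (0:ℝ) < 2^i := by positivity
    rw [ha_def]
    have := Nat.lt_floor_add_one (θ * 2^i)
    rw [sub_le_iff_le_add, div_add' _ _ _ (ne_of_gt h2i), le_div_iff₀ h2i]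
    have hpow : ((1:ℝ)/2)^i * 2^i = 1 := by
      rw [div_pow, one_pow, div_mul_cancel₀]
      exact ne_of_gt h2i
    nlinarith
  have ha_mem : ∀ i, a i ∈ Set.Icc (0:ℝ) 1 := by
    intro i
    exact ⟨by rw [ha_def]; positivity, le_trans (ha_le i) hθ1⟩
  have ha_tendsto : Filter.Tendsto a Filter.atTop (nhds θ) := by
    have hlow : Filter.Tendsto (fun i : ℕ => θ - (1/2)^i) Filter.atTop (nhds θ) := by
      have : Filter.Tendsto (fun i : ℕ => ((1:ℝ)/2)^i) Filter.atTop (nhds 0) := by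
        apply tendsto_pow_atTop_nhds_zero_of_lt_one <;> norm_num
      simpa using Filter.Tendsto.const_sub θ this
    exact tendsto_of_tendsto_of_tendsto_of_le_of_le hlow tendsto_const_nhds ha_ge ha_le
  have ha_tendsto' : Filter.Tendsto a Filter.atTop (nhdsWithin θ (Set.Icc 0 1)) := by
    apply tendsto_nhdsWithin_of_tendsto_nhds_of_eventually_within a ha_tendsto
    exact Filter.Eventually.of_forall ha_mem
  have hg_tendsto : Filter.Tendsto (fun i => g (a i)) Filter.atTop (nhds (g θ)) := by
    exact ((hgcont θ ⟨hθ0, hθ1⟩).tendsto).comp ha_tendsto'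
  have hfloor_le : ∀ i : ℕ, ⌊θ * 2^i⌋₊ ≤ 2^i := by
    intro i
    have : θ * 2^i ≤ ((2^i : ℕ):ℝ) := by
      push_cast
      nlinarith [pow_pos (by norm_num : (0:ℝ) < 2) i]
    calc ⌊θ * 2^i⌋₊ ≤ ⌊((2^i : ℕ):ℝ)⌋₊ := Nat.floor_mono this
    _ = 2^i := Nat.floor_natCast _
  have hg0 : 0 ≤ g θ := by
    apply ge_of_tendsto' hg_tendsto
    intro i
    exact hgdy i ⌊θ * 2^i⌋₊ (hfloor_le i)
  simp only [hg_def] at hg0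
  linarith
end
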